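/- arXiv:1808.10621 — 4 statements merged into one kernel-verified Lean document; each statement's English description precedes it below -/
import Mathlib

section
/- (Proposition 3.2(i).) Let Ω ⊆ ℝ³ be a bounded open set with 0 ∈ Ω, r > 0, T the inversion in the sphere of radius r centered at the origin, σ the 2-dimensional Hausdorff measure restricted to ∂Ω, σ* the 2-dimensional Hausdorff measure restricted to ∂Ω* := T(∂Ω), ν : ℝ³ → ℝ³ any map with ν*(T x) := −R_x ν(x), φ : ℝ³ → ℝ bounded Borel measurable with σ(∂Ω) < ∞, and φ*(T y) := φ(y)|y|³/r³. Define S[φ](x) := ∫_{∂Ω} Γ(x−y)φ(y) dσ(y), K*[φ](x) := ∫_{∂Ω} ⟨ν(x), ∇Γ(x−y)⟩φ(y) dσ(y), and analogously S*[φ*](w) := ∫_{∂Ω*} Γ(w−z)φ*(z) dσ*(z), K**[φ*](w) := ∫_{∂Ω*} ⟨ν*(w), ∇Γ(w−z)⟩φ*(z) dσ*(z). Assuming all these integrands are integrable for σ-a.e. (resp. σ*-a.e.) base point and the products K*[φ]·S[φ], K**[φ*]·S*[φ*], and (⟨x,ν(x)⟩/|x|²)(S[φ](x))² are integrable, then −∫_{∂Ω*}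 K**[φ*](w) S*[φ*](w) dσ*(w) − ∫_{∂Ω} K*[φ](x) S[φ](x) dσ(x) = ∫_{∂Ω} (⟨x, ν(x)⟩/|x|²) (S[φ](x))² dσ(x), where Γ(z) = −1/(4π|z|) and ∇Γ(z) = z/(4π|z|³). (This is ⟨K**[φ*], φ*⟩_{∂Ω*} + ⟨K*[φ], φ⟩_{∂Ω} = ∫_{∂Ω} (x·ν_x/|x|²)|S[φ](x)|² dS with the inner product ⟨φ,ψ⟩ = −∫ φ S[ψ] dσ.) -/
open MeasureTheory
open scoped Real RealInnerProductSpace ENNReal NNReal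

noncomputable section NPInvAux

local notation "E3" => EuclideanSpace ℝ (Fin 3)

namespace NPInv

def inv3 (r : ℝ) (x : E3) : E3 := (r ^ 2 / ‖x‖ ^ 2) • x

lemma norm_inv3 (r : ℝ) (hr : 0 < r) (x : E3) (hx : x ≠ 0) :
    ‖inv3 r x‖ = r ^ 2 / ‖x‖ := by
  have hs : 0 < ‖x‖ := norm_pos_iff.2 hx
  rw [inv3, norm_smul, Real.norm_eq_abs, abs_of_nonneg (by positivity)]
  field_simp

lemma inv3_invol (r : ℝ) (hr : 0 < r) (x : E3) : inv3 r (inv3 r x) = x := by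
  rcases eq_or_ne x 0 with rfl | hx
  · simp [inv3]
  · have hs : 0 < ‖x‖ := norm_pos_iff.2 hx
    rw [show inv3 r (inv3 r x) = (r ^ 2 / ‖inv3 r x‖ ^ 2) • ((r ^ 2 / ‖x‖ ^ 2) • x) from rfl,
      norm_inv3 r hr x hx, smul_smul]
    have : r ^ 2 / (r ^ 2 / ‖x‖) ^ 2 * (r ^ 2 / ‖x‖ ^ 2) = 1 := by
      field_simp
    rw [this, one_smul]

lemma dist_inv3 (r : ℝ) (hr : 0 < r) {x y : E3} (hx : x ≠ 0) (hy : y ≠ 0) :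
    ‖inv3 r x - inv3 r y‖ = r ^ 2 * ‖x - y‖ / (‖x‖ * ‖y‖) := by
  have hs : 0 < ‖x‖ := norm_pos_iff.2 hx
  have ht : 0 < ‖y‖ := norm_pos_iff.2 hy
  have hsq : ‖inv3 r x - inv3 r y‖ ^ 2 = (r ^ 2 * ‖x - y‖ / (‖x‖ * ‖y‖)) ^ 2 := by
    rw [norm_sub_sq_real, div_pow, mul_pow, norm_sub_sq_real]
    rw [norm_inv3 r hr x hx, norm_inv3 r hr y hy]
    rw [show inv3 r x = (r ^ 2 / ‖x‖ ^ 2) • x from rfl,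
      show inv3 r y = (r ^ 2 / ‖y‖ ^ 2) • y from rfl]
    rw [real_inner_smul_left, real_inner_smul_right]
    field_simp
    ring
  have h1 : (0:ℝ) ≤ ‖inv3 r x - inv3 r y‖ := norm_nonneg _
  have h2 : (0:ℝ) ≤ r ^ 2 * ‖x - y‖ / (‖x‖ * ‖y‖) := by positivity
  nlinarith [hsq]

lemma measurable_inv3 (r : ℝ) : Measurable (inv3 r) := by
  refine Measurable.smul (f := fun x : E3 => r ^ 2 / ‖x‖ ^ 2) (g := id) ?_ ?_
  · exact measurable_const.div ((measurable_norm).pow_const 2)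
  · exact measurable_id

lemma inv3_injective (r : ℝ) (hr : 0 < r) : Function.Injective (inv3 r) :=
  Function.LeftInverse.injective (g := inv3 r) (inv3_invol r hr)

lemma image3_eq_preimage3 (r : ℝ) (hr : 0 < r) (s : Set E3) :
    inv3 r '' s = inv3 r ⁻¹' s := by
  ext z
  constructor
  · rintro ⟨y, hy, rfl⟩
    simpa [Set.mem_preimage, inv3_invol r hr] using hy
  · intro h
    exact ⟨inv3 r z, h, inv3_invol r hr z⟩

lemma image_le (r : ℝ) (hr : 0 < r) {a : ℝ} (ha : 0 < a) {A : Set E3}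
    (hA : ∀ y ∈ A, a ≤ ‖y‖) :
    μH[2] (inv3 r '' A) ≤ ENNReal.ofReal ((r ^ 2 / a ^ 2) ^ 2) * μH[2] A := by
  have hc : (0:ℝ) ≤ r ^ 2 / a ^ 2 := by positivity
  have hlip : LipschitzOnWith (Real.toNNReal (r ^ 2 / a ^ 2)) (inv3 r) A := by
    rw [lipschitzOnWith_iff_dist_le_mul]
    intro x hx y hy
    have hax := hA x hx; have hay := hA y hy
    have hx0 : x ≠ 0 := fun h => by simp [h] at hax; linarith
    have hy0 : y ≠ 0 := fun h => by simp [h] at hay; linarith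
    rw [dist_eq_norm, dist_eq_norm, dist_inv3 r hr hx0 hy0,
      Real.coe_toNNReal _ hc]
    have hs : 0 < ‖x‖ := lt_of_lt_of_le ha hax
    have ht : 0 < ‖y‖ := lt_of_lt_of_le ha hay
    rw [div_le_iff₀ (by positivity)]
    have h1 : r ^ 2 / a ^ 2 * ‖x - y‖ * (‖x‖ * ‖y‖) =
        (r ^ 2 * ‖x - y‖) * ((‖x‖ * ‖y‖) / a ^ 2) := by
      ring
    rw [h1]
    have h2 : (1:ℝ) ≤ (‖x‖ * ‖y‖) / a ^ 2 := by
      rw [le_div_iff₀ (by positivity)]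
      nlinarith
    nlinarith [norm_nonneg (x - y), sq_nonneg r,
      mul_nonneg (mul_nonneg (sq_nonneg r) (norm_nonneg (x - y))) (sub_nonneg.2 h2)]
  have := hlip.hausdorffMeasure_image_le (d := 2) (by norm_num)
  refine le_trans this (le_of_eq ?_)
  congr 1
  rw [show ((2:ℝ) = ((2:ℕ):ℝ)) by norm_num, ENNReal.rpow_natCast,
    ENNReal.ofReal_pow hc]
  rfl

lemma le_image (r : ℝ) (hr : 0 < r) {b : ℝ} (hb : 0 < b) {A : Set E3}
    (hA : ∀ y ∈ A, ‖y‖ ≤ b ∧ y ≠ 0) :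
    ENNReal.ofReal ((r ^ 2 / b ^ 2) ^ 2) * μH[2] A ≤ μH[2] (inv3 r '' A) := by
  have key : μH[2] A ≤ ENNReal.ofReal ((b ^ 2 / r ^ 2) ^ 2) * μH[2] (inv3 r '' A) := by
    have ha' : (0:ℝ) < r ^ 2 / b := by positivity
    have hbound : ∀ z ∈ inv3 r '' A, r ^ 2 / b ≤ ‖z‖ := by
      rintro z ⟨y, hy, rfl⟩
      rw [norm_inv3 r hr y (hA y hy).2]
      have hy0 : 0 < ‖y‖ := norm_pos_iff.2 (hA y hy).2
      exact div_le_div_of_nonneg_left (by positivity) hy0 (hA y hy).1 |>.trans_eq rfl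
    have := image_le r hr ha' hbound
    have himg : inv3 r '' (inv3 r '' A) = A := by
      rw [Set.image_image]
      simp only [inv3_invol r hr, Set.image_id']
    rw [himg] at this
    refine le_trans this (le_of_eq ?_)
    congr 2
    field_simp
  calc ENNReal.ofReal ((r ^ 2 / b ^ 2) ^ 2) * μH[2] A
      ≤ ENNReal.ofReal ((r ^ 2 / b ^ 2) ^ 2) *
        (ENNReal.ofReal ((b ^ 2 / r ^ 2) ^ 2) * μH[2] (inv3 r '' A)) := by gcongr
    _ = μH[2] (inv3 r '' A) := by
        rw [← mul_assoc, ← ENNReal.ofReal_mul (by positivity)]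
        have : (r ^ 2 / b ^ 2) ^ 2 * (b ^ 2 / r ^ 2) ^ 2 = 1 := by
          field_simp
        rw [this, ENNReal.ofReal_one, one_mul]

lemma ennreal_squeeze (X Y : ℝ≥0∞)
    (h : ∀ ε : ℝ, 0 < ε → X ≤ ENNReal.ofReal ((1 + ε) ^ 4) * Y) : X ≤ Y := by
  have htend : Filter.Tendsto (fun ε : ℝ => ENNReal.ofReal ((1 + ε) ^ 4) * Y)
      (nhdsWithin 0 (Set.Ioi 0)) (nhds Y) := by
    have h1 : Filter.Tendsto (fun ε : ℝ => ENNReal.ofReal ((1 + ε) ^ 4))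
        (nhdsWithin 0 (Set.Ioi 0)) (nhds 1) := by
      have h2 : Filter.Tendsto (fun ε : ℝ => ENNReal.ofReal ((1 + ε) ^ 4)) (nhds 0)
          (nhds (ENNReal.ofReal ((1 + 0) ^ 4))) :=
        (ENNReal.continuous_ofReal.comp (by continuity)).tendsto 0
      simpa using h2.mono_left nhdsWithin_le_nhds
    simpa using ENNReal.Tendsto.mul_const h1 (Or.inl one_ne_zero)
  refine ge_of_tendsto htend ?_
  filter_upwards [self_mem_nhdsWithin] with ε (hε : ε ∈ Set.Ioi 0)
  exact h ε hε

lemma image_eq (r : ℝ) (hr : 0 < r) {a b : ℝ} (ha : 0 < a) {A : Set E3}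
    (hAm : MeasurableSet A) (hA : ∀ y ∈ A, a ≤ ‖y‖ ∧ ‖y‖ ≤ b)
    (hfin : μH[2] A < ⊤) :
    μH[2] (inv3 r '' A) = ∫⁻ y in A, ENNReal.ofReal (r ^ 4 / ‖y‖ ^ 4) ∂μH[2] := by
  classical
  set μ := (μH[2] : Measure E3)
  set I := ∫⁻ y in A, ENNReal.ofReal (r ^ 4 / ‖y‖ ^ 4) ∂μ with hI
  have hIfin : I ≠ ⊤ := by
    have hle : I ≤ ENNReal.ofReal (r ^ 4 / a ^ 4) * μ A := by
      rw [hI]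
      calc ∫⁻ y in A, ENNReal.ofReal (r ^ 4 / ‖y‖ ^ 4) ∂μ
          ≤ ∫⁻ _ in A, ENNReal.ofReal (r ^ 4 / a ^ 4) ∂μ := by
            refine setLIntegral_mono' hAm fun y hy => ?_
            refine ENNReal.ofReal_le_ofReal ?_
            exact div_le_div_of_nonneg_left (by positivity) (by positivity)
              (pow_le_pow_left₀ ha.le (hA y hy).1 4)
        _ = ENNReal.ofReal (r ^ 4 / a ^ 4) * μ A := setLIntegral_const A _
    exact ne_top_of_le_ne_top (ENNReal.mul_ne_top ENNReal.ofReal_ne_top hfin.ne) hle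
  have hXfin : μ (inv3 r '' A) ≠ ⊤ := by
    refine ne_top_of_le_ne_top (ENNReal.mul_ne_top ENNReal.ofReal_ne_top hfin.ne)
      (image_le r hr ha (fun y hy => (hA y hy).1))
  have main : ∀ ε : ℝ, 0 < ε →
      μ (inv3 r '' A) ≤ ENNReal.ofReal ((1 + ε) ^ 4) * I ∧
      I ≤ ENNReal.ofReal ((1 + ε) ^ 4) * μ (inv3 r '' A) := by
    intro ε hε
    have hc1 : (1:ℝ) < 1 + ε := by linarith
    set c := 1 + ε with hc
    have hc0 : (0:ℝ) < c := by linarith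
    set Ak : ℕ → Set E3 := fun k =>
      A ∩ {y | a * c ^ k ≤ ‖y‖ ∧ ‖y‖ < a * c ^ (k + 1)} with hAk
    have hAkm : ∀ k, MeasurableSet (Ak k) := fun k =>
      hAm.inter ((measurableSet_le measurable_const measurable_norm).inter
        (measurableSet_lt measurable_norm measurable_const))
    have hcov : A = ⋃ k, Ak k := by
      ext y
      constructor
      · intro hy
        have hay : a ≤ ‖y‖ := (hA y hy).1
        have hexists : ∃ k : ℕ, ‖y‖ < a * c ^ (k + 1) := by
          obtain ⟨n, hn⟩ := pow_unbounded_of_one_lt (‖y‖ / a) hc1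
          rw [div_lt_iff₀ ha] at hn
          have hcp : c ^ n < c ^ (n + 1) := pow_lt_pow_right₀ hc1 (Nat.lt_succ_self n)
          exact ⟨n, by nlinarith⟩
        set k := Nat.find hexists with hk
        refine Set.mem_iUnion.2 ⟨k, hy, ?_, Nat.find_spec hexists⟩
        rcases Nat.eq_zero_or_pos k with hk0 | hkpos
        · rw [hk0]; simpa using hay
        · obtain ⟨m, hm⟩ : ∃ m, k = m + 1 := ⟨k - 1, by omega⟩
          have hmin := not_lt.1 (Nat.find_min hexists (show m < Nat.find hexists by omega))
          rw [hm]
          exact hmin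
      · rintro ⟨s, ⟨k, rfl⟩, hy⟩
        exact hy.1
    have hdisj : Pairwise (Function.onFun Disjoint Ak) := by
      have key : ∀ k l, k < l → Disjoint (Ak k) (Ak l) := by
        intro k l hkl
        rw [Set.disjoint_left]
        rintro y ⟨hyA, hyk⟩ ⟨_, hyl⟩
        have h1 : c ^ (k + 1) ≤ c ^ l := pow_le_pow_right₀ hc1.le (by omega)
        have h2 : a * c ^ (k + 1) ≤ a * c ^ l := by nlinarith
        linarith [hyk.2, hyl.1]
      intro k l hkl
      rcases lt_or_gt_of_ne hkl with h | h
      · exact key k l h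
      · exact (key l k h).symm
    have himgm : ∀ k, MeasurableSet (inv3 r '' Ak k) := fun k => by
      rw [image3_eq_preimage3 r hr]
      exact measurable_inv3 r (hAkm k)
    have hs1 : μ (inv3 r '' A) = ∑' k, μ (inv3 r '' Ak k) := by
      conv_lhs => rw [hcov, Set.image_iUnion]
      exact measure_iUnion
        (fun k l hkl => (Set.disjoint_image_iff (inv3_injective r hr)).2 (hdisj hkl)) himgm
    have hs2 : I = ∑' k, ∫⁻ y in Ak k, ENNReal.ofReal (r ^ 4 / ‖y‖ ^ 4) ∂μ := by
      rw [hI]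
      conv_lhs => rw [hcov]
      exact lintegral_iUnion hAkm hdisj _
    have hkb : ∀ k,
        μ (inv3 r '' Ak k) ≤ ENNReal.ofReal ((1 + ε) ^ 4) *
          ∫⁻ y in Ak k, ENNReal.ofReal (r ^ 4 / ‖y‖ ^ 4) ∂μ ∧
        (∫⁻ y in Ak k, ENNReal.ofReal (r ^ 4 / ‖y‖ ^ 4) ∂μ) ≤
          ENNReal.ofReal ((1 + ε) ^ 4) * μ (inv3 r '' Ak k) := by
      intro k
      set α := a * c ^ k with hα
      have hα0 : 0 < α := by positivity
      have hαc : 0 < α * c := by positivity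
      have hsucc : ∀ y ∈ Ak k, ‖y‖ < α * c := by
        intro y hy
        have := hy.2.2
        rw [hα]
        calc ‖y‖ < a * c ^ (k + 1) := this
          _ = a * c ^ k * c := by rw [pow_succ]; ring
      have hlow : ∀ y ∈ Ak k, α ≤ ‖y‖ := fun y hy => hy.2.1
      have hne : ∀ y ∈ Ak k, y ≠ 0 := by
        intro y hy h0
        rw [h0] at hy
        have := hlow 0 hy
        simp at this
        linarith
      have hub : μ (inv3 r '' Ak k) ≤ ENNReal.ofReal ((r ^ 2 / α ^ 2) ^ 2) * μ (Ak k) :=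
        image_le r hr hα0 hlow
      have hlb : ENNReal.ofReal ((r ^ 2 / (α * c) ^ 2) ^ 2) * μ (Ak k) ≤
          μ (inv3 r '' Ak k) :=
        le_image r hr hαc (fun y hy => ⟨(hsucc y hy).le, hne y hy⟩)
      have hVub : (∫⁻ y in Ak k, ENNReal.ofReal (r ^ 4 / ‖y‖ ^ 4) ∂μ) ≤
          ENNReal.ofReal (r ^ 4 / α ^ 4) * μ (Ak k) := by
        calc (∫⁻ y in Ak k, ENNReal.ofReal (r ^ 4 / ‖y‖ ^ 4) ∂μ)
            ≤ ∫⁻ _ in Ak k, ENNReal.ofReal (r ^ 4 / α ^ 4) ∂μ := by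
              refine setLIntegral_mono' (hAkm k) fun y hy => ?_
              refine ENNReal.ofReal_le_ofReal ?_
              exact div_le_div_of_nonneg_left (by positivity) (by positivity)
                (pow_le_pow_left₀ hα0.le (hlow y hy) 4)
          _ = ENNReal.ofReal (r ^ 4 / α ^ 4) * μ (Ak k) := setLIntegral_const _ _
      have hVlb : ENNReal.ofReal (r ^ 4 / (α * c) ^ 4) * μ (Ak k) ≤
          ∫⁻ y in Ak k, ENNReal.ofReal (r ^ 4 / ‖y‖ ^ 4) ∂μ := by
        rw [← setLIntegral_const (Ak k) (ENNReal.ofReal (r ^ 4 / (α * c) ^ 4))]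
        refine setLIntegral_mono' (hAkm k) fun y hy => ?_
        refine ENNReal.ofReal_le_ofReal ?_
        have hy0 : 0 < ‖y‖ := lt_of_lt_of_le hα0 (hlow y hy)
        exact div_le_div_of_nonneg_left (by positivity) (by positivity)
          (pow_le_pow_left₀ hy0.le (hsucc y hy).le 4)
      have e1 : (r ^ 2 / α ^ 2) ^ 2 = (1 + ε) ^ 4 * (r ^ 4 / (α * c) ^ 4) := by
        rw [hc]
        field_simp
      have e2 : (r ^ 2 / (α * c) ^ 2) ^ 2 = r ^ 4 / (α * c) ^ 4 := by
        field_simp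
      have e3 : r ^ 4 / α ^ 4 = (1 + ε) ^ 4 * (r ^ 4 / (α * c) ^ 4) := by
        rw [hc]
        field_simp
      constructor
      · calc μ (inv3 r '' Ak k) ≤ ENNReal.ofReal ((r ^ 2 / α ^ 2) ^ 2) * μ (Ak k) := hub
          _ = ENNReal.ofReal ((1 + ε) ^ 4) *
              (ENNReal.ofReal (r ^ 4 / (α * c) ^ 4) * μ (Ak k)) := by
            rw [e1, ENNReal.ofReal_mul (by positivity), mul_assoc]
          _ ≤ ENNReal.ofReal ((1 + ε) ^ 4) *
              ∫⁻ y in Ak k, ENNReal.ofReal (r ^ 4 / ‖y‖ ^ 4) ∂μ := by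
            exact mul_le_mul_right hVlb _
      · calc (∫⁻ y in Ak k, ENNReal.ofReal (r ^ 4 / ‖y‖ ^ 4) ∂μ)
            ≤ ENNReal.ofReal (r ^ 4 / α ^ 4) * μ (Ak k) := hVub
          _ = ENNReal.ofReal ((1 + ε) ^ 4) *
              (ENNReal.ofReal ((r ^ 2 / (α * c) ^ 2) ^ 2) * μ (Ak k)) := by
            rw [e2, e3, ENNReal.ofReal_mul (by positivity), mul_assoc]
          _ ≤ ENNReal.ofReal ((1 + ε) ^ 4) * μ (inv3 r '' Ak k) := by
            exact mul_le_mul_right hlb _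
    constructor
    · calc μ (inv3 r '' A) = ∑' k, μ (inv3 r '' Ak k) := hs1
        _ ≤ ∑' k, ENNReal.ofReal ((1 + ε) ^ 4) *
            ∫⁻ y in Ak k, ENNReal.ofReal (r ^ 4 / ‖y‖ ^ 4) ∂μ :=
          ENNReal.tsum_le_tsum fun k => (hkb k).1
        _ = ENNReal.ofReal ((1 + ε) ^ 4) * I := by rw [ENNReal.tsum_mul_left, ← hs2]
    · calc I = ∑' k, ∫⁻ y in Ak k, ENNReal.ofReal (r ^ 4 / ‖y‖ ^ 4) ∂μ := hs2
        _ ≤ ∑' k, ENNReal.ofReal ((1 + ε) ^ 4) * μ (inv3 r '' Ak k) :=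
          ENNReal.tsum_le_tsum fun k => (hkb k).2
        _ = ENNReal.ofReal ((1 + ε) ^ 4) * μ (inv3 r '' A) := by
          rw [ENNReal.tsum_mul_left, ← hs1]
  exact le_antisymm (ennreal_squeeze _ _ fun ε hε => (main ε hε).1)
    (ennreal_squeeze _ _ fun ε hε => (main ε hε).2)

def inv3Equiv (r : ℝ) (hr : 0 < r) : E3 ≃ᵐ E3 where
  toFun := inv3 r
  invFun := inv3 r
  left_inv := inv3_invol r hr
  right_inv := inv3_invol r hr
  measurable_toFun := measurable_inv3 r
  measurable_invFun := measurable_inv3 r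

lemma map_withDensity (r : ℝ) (hr : 0 < r) {F : Set E3} (hFm : MeasurableSet F)
    {a b : ℝ} (ha : 0 < a) (hF : ∀ y ∈ F, a ≤ ‖y‖ ∧ ‖y‖ ≤ b)
    (hFfin : μH[2] F < ⊤) :
    μH[2].restrict (inv3 r '' F) =
      Measure.map (inv3 r)
        ((μH[2].restrict F).withDensity fun y => ENNReal.ofReal (r ^ 4 / ‖y‖ ^ 4)) := by
  have hFmimg : MeasurableSet (inv3 r '' F) := by
    rw [image3_eq_preimage3 r hr]; exact measurable_inv3 r hFm
  ext B hB
  rw [Measure.map_apply (measurable_inv3 r) hB, withDensity_apply _ (measurable_inv3 r hB),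
    Measure.restrict_restrict (measurable_inv3 r hB), Measure.restrict_apply hB]
  have hset : B ∩ inv3 r '' F = inv3 r '' (inv3 r ⁻¹' B ∩ F) := by
    rw [Set.image_inter (inv3_injective r hr),
      Set.image_preimage_eq _ (Function.RightInverse.surjective (inv3_invol r hr))]
  rw [hset]
  exact image_eq r hr ha ((measurable_inv3 r hB).inter hFm)
    (fun y hy => hF y hy.2) (lt_of_le_of_lt (measure_mono Set.inter_subset_right) hFfin)

lemma integral_transfer (r : ℝ) (hr : 0 < r) {F : Set E3} (hFm : MeasurableSet F)
    {a b : ℝ} (ha : 0 < a) (hF : ∀ y ∈ F, a ≤ ‖y‖ ∧ ‖y‖ ≤ b)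
    (hFfin : μH[2] F < ⊤) (f : E3 → ℝ) :
    ∫ z, f z ∂(μH[2].restrict (inv3 r '' F)) =
      ∫ y, (r ^ 4 / ‖y‖ ^ 4) * f (inv3 r y) ∂(μH[2].restrict F) := by
  rw [map_withDensity r hr hFm ha hF hFfin]
  have hmapeq : Measure.map (inv3 r)
      ((μH[2].restrict F).withDensity fun y => ENNReal.ofReal (r ^ 4 / ‖y‖ ^ 4)) =
      Measure.map (inv3Equiv r hr)
      ((μH[2].restrict F).withDensity fun y => ENNReal.ofReal (r ^ 4 / ‖y‖ ^ 4)) := rfl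
  rw [hmapeq, MeasureTheory.integral_map_equiv]
  have hdens : (fun y : E3 => ENNReal.ofReal (r ^ 4 / ‖y‖ ^ 4)) =
      fun y : E3 => ((Real.toNNReal (r ^ 4 / ‖y‖ ^ 4) : ℝ≥0) : ℝ≥0∞) := rfl
  have hwmeas : Measurable fun y : E3 => Real.toNNReal (r ^ 4 / ‖y‖ ^ 4) :=
    (measurable_const.div ((measurable_norm).pow_const 4)).real_toNNReal
  rw [hdens, integral_withDensity_eq_integral_smul hwmeas]
  refine integral_congr_ae (Filter.Eventually.of_forall fun y => ?_)
  have hnn : (0:ℝ) ≤ r ^ 4 / ‖y‖ ^ 4 := by positivity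
  show (Real.toNNReal (r ^ 4 / ‖y‖ ^ 4) : ℝ≥0) • f (inv3Equiv r hr y) = _
  rw [NNReal.smul_def, Real.coe_toNNReal _ hnn]
  rfl

lemma pw1 (r : ℝ) (hr : 0 < r) {x y : E3} (hx : x ≠ 0) (hy : y ≠ 0) (φy : ℝ) :
    (r ^ 4 / ‖y‖ ^ 4) * ((-1 / (4 * π * ‖inv3 r x - inv3 r y‖)) * (φy * ‖y‖ ^ 3 / r ^ 3)) =
      (‖x‖ / r) * ((-1 / (4 * π * ‖x - y‖)) * φy) := by
  rcases eq_or_ne x y with rfl | hne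
  · simp
  have hD : 0 < ‖x - y‖ := norm_sub_pos_iff.2 hne
  have hs : 0 < ‖x‖ := norm_pos_iff.2 hx
  have ht : 0 < ‖y‖ := norm_pos_iff.2 hy
  rw [dist_inv3 r hr hx hy]
  have hπ : (0:ℝ) < π := Real.pi_pos
  field_simp

lemma pw2 (r : ℝ) (hr : 0 < r) {x y : E3} (hx : x ≠ 0) (hy : y ≠ 0) (n : E3) (φy : ℝ) :
    (r ^ 4 / ‖y‖ ^ 4) *
        (⟪-(n - (2 * ⟪x, n⟫ / ‖x‖ ^ 2) • x),
            (4 * π * ‖inv3 r x - inv3 r y‖ ^ 3)⁻¹ • (inv3 r x - inv3 r y)⟫ *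
          (φy * ‖y‖ ^ 3 / r ^ 3)) =
      -(‖x‖ ^ 3 / r ^ 3) *
        (⟪n, (4 * π * ‖x - y‖ ^ 3)⁻¹ • (x - y)⟫ * φy +
          (⟪x, n⟫ / ‖x‖ ^ 2) * ((-1 / (4 * π * ‖x - y‖)) * φy)) := by
  rcases eq_or_ne x y with rfl | hne
  · simp
  have hD : 0 < ‖x - y‖ := norm_sub_pos_iff.2 hne
  have hs : 0 < ‖x‖ := norm_pos_iff.2 hx
  have ht : 0 < ‖y‖ := norm_pos_iff.2 hy
  have hπ : (0:ℝ) < π := Real.pi_pos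
  have hΔ : inv3 r x - inv3 r y = (r ^ 2 / ‖x‖ ^ 2) • x - (r ^ 2 / ‖y‖ ^ 2) • y := rfl
  have hDn : ‖inv3 r x - inv3 r y‖ = r ^ 2 * ‖x - y‖ / (‖x‖ * ‖y‖) := dist_inv3 r hr hx hy
  have hD2 : ‖x - y‖ ^ 2 = ‖x‖ ^ 2 - 2 * ⟪x, y⟫ + ‖y‖ ^ 2 := norm_sub_sq_real x y
  have hip : ⟪x, y⟫ = (‖x‖ ^ 2 + ‖y‖ ^ 2 - ‖x - y‖ ^ 2) / 2 := by linarith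
  rw [hDn]
  simp only [hΔ, inner_neg_left, inner_sub_left, inner_sub_right,
    real_inner_smul_left, real_inner_smul_right, real_inner_self_eq_norm_sq]
  have e2 : (⟪y,x⟫:ℝ) = ⟪x,y⟫ := real_inner_comm x y
  have e1 : (⟪n,x⟫:ℝ) = ⟪x,n⟫ := real_inner_comm x n
  simp only [e1, e2]
  rw [hip]
  field_simp
  ring

end NPInv

end NPInvAux

/-- Proposition 3.2(i): if `0 ∈ Ω`, then
`⟨K**[φ*], φ*⟩_{∂Ω*} + ⟨K*[φ], φ⟩_{∂Ω} = ∫_{∂Ω} (x·ν_x/|x|²)|S[φ](x)|² dσ`,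
where `⟨φ, ψ⟩ = −∫ φ S[ψ] dσ`, `Γ(z) = −1/(4π|z|)`, `∇Γ(z) = z/(4π|z|³)`,
`φ*(Ty) = φ(y)|y|³/r³`, and `ν*(Tx) = −R_x ν(x)`. -/
theorem np_inversion_quadratic_form_interior_dim3
    (r : ℝ) (hr : 0 < r) (Ω : Set (EuclideanSpace ℝ (Fin 3)))
    (hopen : IsOpen Ω) (hbd : Bornology.IsBounded Ω) (h0 : (0 : EuclideanSpace ℝ (Fin 3)) ∈ Ω)
    (T : EuclideanSpace ℝ (Fin 3) → EuclideanSpace ℝ (Fin 3))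
    (hT : ∀ x : EuclideanSpace ℝ (Fin 3), x ≠ 0 → T x = (r ^ 2 / ‖x‖ ^ 2) • x)
    (σ σs : Measure (EuclideanSpace ℝ (Fin 3)))
    (hσ : σ = μH[2].restrict (frontier Ω))
    (hσs : σs = μH[2].restrict (T '' frontier Ω))
    (hfin : σ (frontier Ω) < ⊤)
    (R : EuclideanSpace ℝ (Fin 3) → EuclideanSpace ℝ (Fin 3) → EuclideanSpace ℝ (Fin 3))
    (hR : ∀ x v : EuclideanSpace ℝ (Fin 3), x ≠ 0 →
      R x v = v - (2 * ⟪x, v⟫ / ‖x‖ ^ 2) • x)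
    (ν νs : EuclideanSpace ℝ (Fin 3) → EuclideanSpace ℝ (Fin 3))
    (hνs : ∀ x ∈ frontier Ω, νs (T x) = -(R x (ν x)))
    (φ : EuclideanSpace ℝ (Fin 3) → ℝ) (hφmeas : Measurable φ)
    (hφbdd : ∃ C, ∀ y, |φ y| ≤ C)
    (φs : EuclideanSpace ℝ (Fin 3) → ℝ)
    (hφs : ∀ y ∈ frontier Ω, φs (T y) = φ y * ‖y‖ ^ 3 / r ^ 3)
    -- the single layer potential and NP operator on ∂Ω
    (S K : EuclideanSpace ℝ (Fin 3) → ℝ)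
    (hS : ∀ x, S x = ∫ y, (-1 / (4 * π * ‖x - y‖)) * φ y ∂σ)
    (hK : ∀ x, K x = ∫ y, ⟪ν x, (4 * π * ‖x - y‖ ^ 3)⁻¹ • (x - y)⟫ * φ y ∂σ)
    -- the single layer potential and NP operator on ∂Ω*
    (Ss Ks : EuclideanSpace ℝ (Fin 3) → ℝ)
    (hSs : ∀ w, Ss w = ∫ z, (-1 / (4 * π * ‖w - z‖)) * φs z ∂σs)
    (hKs : ∀ w, Ks w = ∫ z, ⟪νs w, (4 * π * ‖w - z‖ ^ 3)⁻¹ • (w - z)⟫ * φs z ∂σs)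
    -- integrability of the integrands at a.e. base point
    (hae1 : ∀ᵐ x ∂σ, Integrable (fun y => (-1 / (4 * π * ‖x - y‖)) * φ y) σ)
    (hae2 : ∀ᵐ x ∂σ,
      Integrable (fun y => ⟪ν x, (4 * π * ‖x - y‖ ^ 3)⁻¹ • (x - y)⟫ * φ y) σ)
    (hae3 : ∀ᵐ w ∂σs, Integrable (fun z => (-1 / (4 * π * ‖w - z‖)) * φs z) σs)
    (hae4 : ∀ᵐ w ∂σs,
      Integrable (fun z => ⟪νs w, (4 * π * ‖w - z‖ ^ 3)⁻¹ • (w - z)⟫ * φs z) σs)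
    -- integrability of the products
    (hKS : Integrable (fun x => K x * S x) σ)
    (hKsSs : Integrable (fun w => Ks w * Ss w) σs)
    (hq : Integrable (fun x => (⟪x, ν x⟫ / ‖x‖ ^ 2) * (S x) ^ 2) σ) :
    -(∫ w, Ks w * Ss w ∂σs) - ∫ x, K x * S x ∂σ =
      ∫ x, (⟪x, ν x⟫ / ‖x‖ ^ 2) * (S x) ^ 2 ∂σ := by
  clear hae3 hae4 hKsSs hφmeas hφbdd
  set F := frontier Ω with hFdef
  have hFm : MeasurableSet F := isClosed_frontier.measurableSet
  have h0F : (0 : EuclideanSpace ℝ (Fin 3)) ∉ F := by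
    rw [hFdef, hopen.frontier_eq]
    exact fun h => h.2 h0
  have hFfin : μH[2] F < ⊤ := by
    rw [hσ, Measure.restrict_apply hFm, Set.inter_self] at hfin
    exact hfin
  obtain ⟨a, ha, haF⟩ : ∃ a : ℝ, 0 < a ∧ ∀ y ∈ F, a ≤ ‖y‖ := by
    rcases F.eq_empty_or_nonempty with hFe | hFne
    · exact ⟨1, one_pos, fun y hy => by rw [hFe] at hy; exact absurd hy (Set.notMem_empty y)⟩
    · have hpos : 0 < Metric.infDist 0 F :=
        (isClosed_frontier.notMem_iff_infDist_pos hFne).1 h0F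
      refine ⟨Metric.infDist 0 F, hpos, fun y hy => ?_⟩
      have := Metric.infDist_le_dist_of_mem (x := (0 : EuclideanSpace ℝ (Fin 3))) hy
      rwa [dist_zero_left] at this
  obtain ⟨b, hbF⟩ : ∃ b : ℝ, ∀ y ∈ F, ‖y‖ ≤ b := by
    have hFb : Bornology.IsBounded F := hbd.closure.subset frontier_subset_closure
    obtain ⟨C, hC⟩ := isBounded_iff_forall_norm_le.1 hFb
    exact ⟨C, hC⟩
  have hFa : ∀ y ∈ F, a ≤ ‖y‖ ∧ ‖y‖ ≤ b := fun y hy => ⟨haF y hy, hbF y hy⟩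
  have hne0 : ∀ y ∈ F, y ≠ 0 := fun y hy h => by rw [h] at hy; exact h0F hy
  have hTF : ∀ y ∈ F, T y = NPInv.inv3 r y := fun y hy => hT y (hne0 y hy)
  have hσs' : σs = μH[2].restrict (NPInv.inv3 r '' F) := by
    rw [hσs, Set.image_congr hTF]
  have haeF : ∀ᵐ x ∂σ, x ∈ F := by rw [hσ]; exact ae_restrict_mem hFm
  have htrans : ∀ f : EuclideanSpace ℝ (Fin 3) → ℝ,
      ∫ z, f z ∂σs = ∫ y, (r ^ 4 / ‖y‖ ^ 4) * f (NPInv.inv3 r y) ∂σ := by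
    intro f
    rw [hσs', hσ]
    exact NPInv.integral_transfer r hr hFm ha hFa hFfin f
  -- pointwise formula for Ss
  have hSsT : ∀ x ∈ F, Ss (NPInv.inv3 r x) = (‖x‖ / r) * S x := by
    intro x hxF
    have hx0 := hne0 x hxF
    rw [hSs (NPInv.inv3 r x),
      htrans (fun z => (-1 / (4 * π * ‖NPInv.inv3 r x - z‖)) * φs z)]
    have hcongr : ∀ᵐ y ∂σ,
        (r ^ 4 / ‖y‖ ^ 4) * ((-1 / (4 * π * ‖NPInv.inv3 r x - NPInv.inv3 r y‖)) *
          φs (NPInv.inv3 r y)) =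
        (‖x‖ / r) * ((-1 / (4 * π * ‖x - y‖)) * φ y) := by
      filter_upwards [haeF] with y hyF
      have hy0 := hne0 y hyF
      have hφsy : φs (NPInv.inv3 r y) = φ y * ‖y‖ ^ 3 / r ^ 3 := by
        rw [← hTF y hyF]; exact hφs y hyF
      rw [hφsy]
      exact NPInv.pw1 r hr hx0 hy0 (φ y)
    rw [integral_congr_ae hcongr, integral_const_mul, ← hS x]
  -- pointwise formula for Ks
  have hKsT : ∀ x ∈ F,
      Integrable (fun y => (-1 / (4 * π * ‖x - y‖)) * φ y) σ →
      Integrable (fun y => ⟪ν x, (4 * π * ‖x - y‖ ^ 3)⁻¹ • (x - y)⟫ * φ y) σ →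
      Ks (NPInv.inv3 r x) = -(‖x‖ ^ 3 / r ^ 3) * (K x + (⟪x, ν x⟫ / ‖x‖ ^ 2) * S x) := by
    intro x hxF h1 h2
    have hx0 := hne0 x hxF
    have hνsx : νs (NPInv.inv3 r x) = -(ν x - (2 * ⟪x, ν x⟫ / ‖x‖ ^ 2) • x) := by
      rw [← hTF x hxF, hνs x hxF, hR x (ν x) hx0]
    rw [hKs (NPInv.inv3 r x),
      htrans (fun z => ⟪νs (NPInv.inv3 r x),
        (4 * π * ‖NPInv.inv3 r x - z‖ ^ 3)⁻¹ • (NPInv.inv3 r x - z)⟫ * φs z)]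
    have hcongr : ∀ᵐ y ∂σ,
        (r ^ 4 / ‖y‖ ^ 4) * (⟪νs (NPInv.inv3 r x),
          (4 * π * ‖NPInv.inv3 r x - NPInv.inv3 r y‖ ^ 3)⁻¹ •
            (NPInv.inv3 r x - NPInv.inv3 r y)⟫ * φs (NPInv.inv3 r y)) =
        -(‖x‖ ^ 3 / r ^ 3) * (⟪ν x, (4 * π * ‖x - y‖ ^ 3)⁻¹ • (x - y)⟫ * φ y +
          (⟪x, ν x⟫ / ‖x‖ ^ 2) * ((-1 / (4 * π * ‖x - y‖)) * φ y)) := by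
      filter_upwards [haeF] with y hyF
      have hy0 := hne0 y hyF
      have hφsy : φs (NPInv.inv3 r y) = φ y * ‖y‖ ^ 3 / r ^ 3 := by
        rw [← hTF y hyF]; exact hφs y hyF
      rw [hφsy, hνsx]
      exact NPInv.pw2 r hr hx0 hy0 (ν x) (φ y)
    rw [integral_congr_ae hcongr, integral_const_mul,
      integral_add h2 (h1.const_mul _), integral_const_mul, ← hS x, ← hK x]
  -- the main a.e. identity
  have hmain : ∀ᵐ x ∂σ,
      (r ^ 4 / ‖x‖ ^ 4) * (Ks (NPInv.inv3 r x) * Ss (NPInv.inv3 r x)) =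
      -(K x * S x) - (⟪x, ν x⟫ / ‖x‖ ^ 2) * (S x) ^ 2 := by
    filter_upwards [haeF, hae1, hae2] with x hxF h1 h2
    rw [hSsT x hxF, hKsT x hxF h1 h2]
    have hs : 0 < ‖x‖ := lt_of_lt_of_le ha (haF x hxF)
    field_simp
    ring
  have hfinal : ∫ w, Ks w * Ss w ∂σs =
      -(∫ x, K x * S x ∂σ) - ∫ x, (⟪x, ν x⟫ / ‖x‖ ^ 2) * (S x) ^ 2 ∂σ := by
    have hKS' : Integrable (fun x => -(K x * S x)) σ := hKS.neg
    rw [htrans (fun w => Ks w * Ss w), integral_congr_ae hmain,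
      integral_sub hKS' hq, integral_neg]
  rw [hfinal]
  ring
end

section
/- (Proposition 3.2(ii).) Let Ω ⊆ ℝ³ be a bounded open set with 0 ∉ closure(Ω), r > 0, T the inversion in the sphere of radius r centered at the origin, σ the 2-dimensional Hausdorff measure restricted to ∂Ω, σ* the 2-dimensional Hausdorff measure restricted to ∂Ω* := T(∂Ω), ν : ℝ³ → ℝ³ any map with ν*(T x) := R_x ν(x), φ : ℝ³ → ℝ bounded Borel measurable with σ(∂Ω) < ∞, and φ*(T y) := φ(y)|y|³/r³. Define S[φ](x) := ∫_{∂Ω} Γ(x−y)φ(y) dσ(y), K*[φ](x) := ∫_{∂Ω} ⟨ν(x), ∇Γ(x−y)⟩φ(y) dσ(y), and analogously S*[φ*], K**[φ*] on ∂Ω* with σ*, ν*. Assuming all the relevant integrands are integrable, then −∫_{∂Ω*} K**[φ*](w) S*[φ*](w) dσ*(w) + ∫_{∂Ω} K*[φ](x) S[φ](x) dσ(x) = −∫_{∂Ω} (⟨x, ν(x)⟩/|x|²) (S[φ](x))² dσ(x), where Γ(z) = −1/(4π|z|) and ∇Γ(z) = z/(4π|z|³). (This is ⟨K**[φ*], φ*⟩_{∂Ω*}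 − ⟨K*[φ], φ⟩_{∂Ω} = −∫_{∂Ω} (x·ν_x/|x|²)|S[φ](x)|² dS.) -/
open MeasureTheory Metric Set
open scoped Real RealInnerProductSpace ENNReal NNReal
noncomputable section

abbrev E3 := EuclideanSpace ℝ (Fin 3)

def invMap (r : ℝ) (x : E3) : E3 := (r ^ 2 / ‖x‖ ^ 2) • x

lemma invMap_norm (r : ℝ) (hr : 0 < r) {x : E3} (hx : x ≠ 0) :
    ‖invMap r x‖ = r ^ 2 / ‖x‖ := by
  have hx' : (0:ℝ) < ‖x‖ := norm_pos_iff.mpr hx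
  rw [invMap, norm_smul, Real.norm_eq_abs, abs_of_pos (by positivity)]
  field_simp

lemma invMap_ne_zero (r : ℝ) (hr : 0 < r) {x : E3} (hx : x ≠ 0) :
    invMap r x ≠ 0 := by
  have hx' : (0:ℝ) < ‖x‖ := norm_pos_iff.mpr hx
  have : (0:ℝ) < ‖invMap r x‖ := by rw [invMap_norm r hr hx]; positivity
  exact norm_pos_iff.mp this

lemma invMap_invMap (r : ℝ) (hr : 0 < r) {x : E3} (hx : x ≠ 0) :
    invMap r (invMap r x) = x := by
  have hx' : (0:ℝ) < ‖x‖ := norm_pos_iff.mpr hx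
  rw [invMap, invMap_norm r hr hx, invMap, smul_smul]
  have h1 : r ^ 2 / (r ^ 2 / ‖x‖) ^ 2 * (r ^ 2 / ‖x‖ ^ 2) = 1 := by
    field_simp
  rw [h1, one_smul]

lemma invMap_dist (r : ℝ) (hr : 0 < r) {x y : E3} (hx : x ≠ 0) (hy : y ≠ 0) :
    ‖invMap r x - invMap r y‖ = r ^ 2 * ‖x - y‖ / (‖x‖ * ‖y‖) := by
  have hx' : (0:ℝ) < ‖x‖ := norm_pos_iff.mpr hx
  have hy' : (0:ℝ) < ‖y‖ := norm_pos_iff.mpr hy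
  have hsq : ‖invMap r x - invMap r y‖ ^ 2 = (r ^ 2 * ‖x - y‖ / (‖x‖ * ‖y‖)) ^ 2 := by
    have e1 : (r ^ 2 * ‖x - y‖ / (‖x‖ * ‖y‖)) ^ 2
        = (r ^ 2) ^ 2 * ‖x - y‖ ^ 2 / (‖x‖ ^ 2 * ‖y‖ ^ 2) := by ring
    rw [e1, norm_sub_sq_real (invMap r x) (invMap r y), norm_sub_sq_real x y]
    simp only [invMap, norm_smul, real_inner_smul_left, real_inner_smul_right,
      Real.norm_eq_abs]
    rw [abs_of_pos (show (0:ℝ) < r ^ 2 / ‖x‖ ^ 2 by positivity),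
      abs_of_pos (show (0:ℝ) < r ^ 2 / ‖y‖ ^ 2 by positivity)]
    have hxx : ⟪x, x⟫ = ‖x‖ ^ 2 := real_inner_self_eq_norm_sq x
    have hyy : ⟪y, y⟫ = ‖y‖ ^ 2 := real_inner_self_eq_norm_sq y
    field_simp
    ring
  have h1 : (0:ℝ) ≤ ‖invMap r x - invMap r y‖ := norm_nonneg _
  have h2 : (0:ℝ) ≤ r ^ 2 * ‖x - y‖ / (‖x‖ * ‖y‖) := by positivity
  exact (sq_eq_sq₀ h1 h2).mp hsq

lemma invMap_measurable (r : ℝ) : Measurable (invMap r) := by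
  show Measurable ((fun x : E3 => r ^ 2 / ‖x‖ ^ 2) • (id : E3 → E3))
  apply Measurable.smul
  · exact (measurable_const.div ((measurable_norm).pow measurable_const))
  · exact measurable_id

lemma invMap_image_eq (r : ℝ) (hr : 0 < r) {S : Set E3} (hS : ∀ x ∈ S, x ≠ 0) :
    invMap r '' S = invMap r ⁻¹' S ∩ {x | x ≠ 0} := by
  ext w
  constructor
  · rintro ⟨x, hxS, rfl⟩
    have hx := hS x hxS
    refine ⟨?_, invMap_ne_zero r hr hx⟩
    simp only [Set.mem_preimage, invMap_invMap r hr hx]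
    exact hxS
  · rintro ⟨hw1, hw2⟩
    exact ⟨invMap r w, hw1, invMap_invMap r hr hw2⟩

lemma invMap_lipschitzOnWith (r : ℝ) (hr : 0 < r) {s : ℝ} (hs : 0 < s) :
    LipschitzOnWith (Real.toNNReal (r ^ 2 / s ^ 2)) (invMap r) {x : E3 | s ≤ ‖x‖} := by
  apply LipschitzOnWith.of_dist_le_mul
  intro x hx y hy
  simp only [Set.mem_setOf_eq] at hx hy
  have hx0 : x ≠ 0 := by intro h; rw [h, norm_zero] at hx; linarith
  have hy0 : y ≠ 0 := by intro h; rw [h, norm_zero] at hy; linarith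
  have hx' : (0:ℝ) < ‖x‖ := norm_pos_iff.mpr hx0
  have hy' : (0:ℝ) < ‖y‖ := norm_pos_iff.mpr hy0
  rw [dist_eq_norm, dist_eq_norm, invMap_dist r hr hx0 hy0,
    Real.coe_toNNReal _ (by positivity)]
  have hxy : (0:ℝ) < ‖x‖ * ‖y‖ := mul_pos hx' hy'
  rw [div_le_iff₀ hxy]
  have h1 : s * s ≤ ‖x‖ * ‖y‖ := mul_le_mul hx hy (le_of_lt hs) (norm_nonneg _)
  have h2 : r ^ 2 * ‖x - y‖ * (s * s) ≤ r ^ 2 * ‖x - y‖ * (‖x‖ * ‖y‖) := by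
    apply mul_le_mul_of_nonneg_left h1 (by positivity)
  have hs2 : s ^ 2 = s * s := sq s
  calc r ^ 2 * ‖x - y‖ ≤ r ^ 2 / s ^ 2 * ‖x - y‖ * (‖x‖ * ‖y‖) := by
        rw [div_mul_eq_mul_div, div_mul_eq_mul_div, le_div_iff₀ (by positivity), hs2]
        linarith

lemma ennreal_rpow_two (a : ℝ≥0∞) : a ^ (2:ℝ) = a * a := by
  rw [show (2:ℝ) = ((2:ℕ):ℝ) by norm_num, ENNReal.rpow_natCast]
  ring

lemma toNN_pow2 (c : ℝ) (hc : 0 ≤ c) :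
    ((Real.toNNReal c : ℝ≥0∞)) ^ (2:ℝ) = ENNReal.ofReal (c^2) := by
  rw [ennreal_rpow_two]
  rw [show ((Real.toNNReal c : ℝ≥0∞)) = ENNReal.ofReal c from rfl,
    ← ENNReal.ofReal_mul hc, sq]

/-- weight measurability -/
lemma wfun_measurable (r : ℝ) :
    Measurable (fun x : E3 => ENNReal.ofReal ((r^2/‖x‖^2)^2)) := by
  apply ENNReal.measurable_ofReal.comp
  apply Measurable.pow _ measurable_const
  exact measurable_const.div (measurable_norm.pow measurable_const)

lemma key_estimate (r : ℝ) (hr : 0 < r) {δ : ℝ} (hδ : 0 < δ) {B : Set E3}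
    (hB : MeasurableSet B) (hBs : ∀ x ∈ B, δ ≤ ‖x‖) {ε : ℝ} (hε : 0 < ε) :
    μH[2] (invMap r '' B)
      ≤ ENNReal.ofReal ((1+ε)^4) * ∫⁻ x in B, ENNReal.ofReal ((r^2/‖x‖^2)^2) ∂μH[2]
    ∧ (∫⁻ x in B, ENNReal.ofReal ((r^2/‖x‖^2)^2) ∂μH[2])
      ≤ ENNReal.ofReal ((1+ε)^4) * μH[2] (invMap r '' B) := by
  set w : E3 → ℝ≥0∞ := fun x => ENNReal.ofReal ((r^2/‖x‖^2)^2) with hw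
  have hwmeas : Measurable w := wfun_measurable r
  set t : ℕ → ℝ := fun i => δ * (1+ε)^i with ht
  have ht_pos : ∀ i, 0 < t i := fun i => by positivity
  have hone : (1:ℝ) < 1 + ε := by linarith
  have ht_succ : ∀ i, t (i+1) = (1+ε) * t i := by
    intro i; simp only [ht, pow_succ]; ring
  have ht_mono : StrictMono t := by
    apply strictMono_nat_of_lt_succ
    intro i
    rw [ht_succ i]
    nlinarith [ht_pos i]
  set P : ℕ → Set E3 := fun i => B ∩ {x | t i ≤ ‖x‖ ∧ ‖x‖ < t (i+1)} with hP
  have hPmeas : ∀ i, MeasurableSet (P i) := by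
    intro i
    exact hB.inter ((measurableSet_le measurable_const measurable_norm).inter
      (measurableSet_lt measurable_norm measurable_const))
  have hPne : ∀ i, ∀ x ∈ P i, x ≠ 0 := by
    intro i x hx
    have : 0 < ‖x‖ := lt_of_lt_of_le (ht_pos i) hx.2.1
    exact norm_pos_iff.mp this
  have hcover : B = ⋃ i, P i := by
    apply Subset.antisymm
    · intro x hx
      have hδx : δ ≤ ‖x‖ := hBs x hx
      have hex : ∃ n, ‖x‖ < t n := by
        obtain ⟨n, hn⟩ := pow_unbounded_of_one_lt (‖x‖/δ) hone
        exact ⟨n, by rw [ht]; calc ‖x‖ = δ * (‖x‖/δ) := by field_simp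
                     _ < δ * (1+ε)^n := by exact mul_lt_mul_of_pos_left hn hδ⟩
      have hlt : ‖x‖ < t (Nat.find hex) := Nat.find_spec hex
      have hn₀0 : Nat.find hex ≠ 0 := by
        intro h
        rw [h] at hlt
        simp only [ht, pow_zero, mul_one] at hlt
        linarith
      obtain ⟨i, hi⟩ := Nat.exists_eq_succ_of_ne_zero hn₀0
      rw [hi] at hlt
      have hge : t i ≤ ‖x‖ := by
        by_contra hcon
        push_neg at hcon
        exact Nat.find_min hex (by omega) hcon
      exact mem_iUnion.mpr ⟨i, hx, hge, hlt⟩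
    · exact iUnion_subset fun i => inter_subset_left
  have hPdisj : Pairwise (Function.onFun Disjoint P) := by
    apply (pairwise_disjoint_on P).mpr
    intro i j hij
    apply Set.disjoint_left.mpr
    intro x hxi hxj
    have h1 : ‖x‖ < t (i+1) := hxi.2.2
    have h2 : t j ≤ ‖x‖ := hxj.2.1
    have : t (i+1) ≤ t j := ht_mono.le_iff_le.mpr hij
    linarith
  set Q : ℕ → Set E3 := fun i => invMap r '' P i with hQ
  have hQeq : ∀ i, Q i = invMap r ⁻¹' (P i) ∩ {x | x ≠ 0} :=
    fun i => invMap_image_eq r hr (hPne i)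
  have hQmeas : ∀ i, MeasurableSet (Q i) := by
    intro i
    rw [hQeq i]
    exact ((hPmeas i).preimage (invMap_measurable r)).inter
      (measurableSet_eq_fun measurable_id measurable_const).compl
  have hQdisj : Pairwise (Function.onFun Disjoint Q) := by
    intro i j hij
    have := hPdisj hij
    simp only [Function.onFun, hQeq] at *
    exact Disjoint.mono inter_subset_left inter_subset_left (this.preimage _)
  -- image as union
  have himg : invMap r '' B = ⋃ i, Q i := by
    rw [hcover, image_iUnion]
  have hsum1 : μH[2] (invMap r '' B) = ∑' i, μH[2] (Q i) := by
    rw [himg]; exact measure_iUnion hQdisj hQmeas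
  have hsum2 : (∫⁻ x in B, w x ∂μH[2]) = ∑' i, ∫⁻ x in P i, w x ∂μH[2] := by
    rw [hcover]; exact lintegral_iUnion hPmeas hPdisj w
  -- per-piece estimates
  have hupper : ∀ i, μH[2] (Q i) ≤ ENNReal.ofReal ((1+ε)^4) * ∫⁻ x in P i, w x ∂μH[2] := by
    intro i
    have hsub : P i ⊆ {x : E3 | t i ≤ ‖x‖} := fun x hx => hx.2.1
    have hlip := (invMap_lipschitzOnWith r hr (ht_pos i)).mono hsub
    have h1 : μH[2] (Q i) ≤ ENNReal.ofReal ((r^2/(t i)^2)^2) * μH[2] (P i) := by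
      have := hlip.hausdorffMeasure_image_le (d := 2) (by norm_num)
      rwa [toNN_pow2 _ (by positivity)] at this
    have h2 : ENNReal.ofReal ((r^2/(t (i+1))^2)^2) * μH[2] (P i) ≤ ∫⁻ x in P i, w x ∂μH[2] := by
      rw [← setLIntegral_const (P i) _]
      apply setLIntegral_mono hwmeas
      intro x hx
      have hx1 : ‖x‖ < t (i+1) := hx.2.2
      have hx0 : 0 < ‖x‖ := lt_of_lt_of_le (ht_pos i) hx.2.1
      apply ENNReal.ofReal_le_ofReal
      have : r^2/(t (i+1))^2 ≤ r^2/‖x‖^2 := by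
        apply div_le_div_of_nonneg_left (by positivity) (by positivity)
        nlinarith
      nlinarith [sq_nonneg (r^2/(t (i+1))^2), div_nonneg (sq_nonneg r) (sq_nonneg (t (i+1)))]
    have h3 : (r^2/(t i)^2)^2 = (1+ε)^4 * (r^2/(t (i+1))^2)^2 := by
      rw [ht_succ i]
      have := (ht_pos i).ne'
      field_simp
    calc μH[2] (Q i) ≤ ENNReal.ofReal ((r^2/(t i)^2)^2) * μH[2] (P i) := h1
      _ = ENNReal.ofReal ((1+ε)^4) * (ENNReal.ofReal ((r^2/(t (i+1))^2)^2) * μH[2] (P i)) := by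
          rw [h3, ENNReal.ofReal_mul (by positivity), mul_assoc]
      _ ≤ ENNReal.ofReal ((1+ε)^4) * ∫⁻ x in P i, w x ∂μH[2] := by
          exact mul_le_mul_right h2 _
  have hlower : ∀ i, (∫⁻ x in P i, w x ∂μH[2]) ≤ ENNReal.ofReal ((1+ε)^4) * μH[2] (Q i) := by
    intro i
    have h2 : (∫⁻ x in P i, w x ∂μH[2]) ≤ ENNReal.ofReal ((r^2/(t i)^2)^2) * μH[2] (P i) := by
      rw [← setLIntegral_const (P i) _]
      apply setLIntegral_mono' (hPmeas i)
      intro x hx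
      have hx1 : t i ≤ ‖x‖ := hx.2.1
      apply ENNReal.ofReal_le_ofReal
      have h4 : r^2/‖x‖^2 ≤ r^2/(t i)^2 := by
        apply div_le_div_of_nonneg_left (by positivity) (by positivity)
        nlinarith [ht_pos i]
      nlinarith [div_nonneg (sq_nonneg r) (sq_nonneg ‖x‖)]
    -- P i = invMap r '' Q i
    have hPi : P i = invMap r '' Q i := by
      rw [hQ]
      simp only
      rw [← image_comp]
      have : EqOn (invMap r ∘ invMap r) id (P i) := by
        intro x hx
        exact invMap_invMap r hr (hPne i x hx)
      rw [image_congr this, image_id]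
    have hQsub : Q i ⊆ {x : E3 | r^2 / t (i+1) ≤ ‖x‖} := by
      rintro _ ⟨x, hx, rfl⟩
      have hx0 : x ≠ 0 := hPne i x hx
      rw [mem_setOf_eq, invMap_norm r hr hx0]
      apply div_le_div_of_nonneg_left (by positivity) (lt_of_lt_of_le (ht_pos i) hx.2.1)
      exact le_of_lt hx.2.2
    have hlip := (invMap_lipschitzOnWith r hr
      (show (0:ℝ) < r^2 / t (i+1) by positivity)).mono hQsub
    have h3 : μH[2] (P i) ≤ ENNReal.ofReal ((r^2/(r^2/t (i+1))^2)^2) * μH[2] (Q i) := by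
      have := hlip.hausdorffMeasure_image_le (d := 2) (by norm_num)
      rw [toNN_pow2 _ (by positivity), ← hPi] at this
      exact this
    have h5 : (r^2/(t i)^2)^2 * (r^2/(r^2/t (i+1))^2)^2 = (1+ε)^4 := by
      rw [ht_succ i]
      have h6 := (ht_pos i).ne'
      have h7 := hr.ne'
      field_simp
    calc (∫⁻ x in P i, w x ∂μH[2]) ≤ ENNReal.ofReal ((r^2/(t i)^2)^2) * μH[2] (P i) := h2
      _ ≤ ENNReal.ofReal ((r^2/(t i)^2)^2) *
          (ENNReal.ofReal ((r^2/(r^2/t (i+1))^2)^2) * μH[2] (Q i)) := mul_le_mul_right h3 _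
      _ = ENNReal.ofReal ((1+ε)^4) * μH[2] (Q i) := by
          rw [← mul_assoc, ← ENNReal.ofReal_mul (by positivity), h5]
  constructor
  · rw [hsum1, hsum2, ← ENNReal.tsum_mul_left]
    exact ENNReal.tsum_le_tsum hupper
  · rw [hsum1, hsum2, ← ENNReal.tsum_mul_left]
    exact ENNReal.tsum_le_tsum hlower

lemma key_coV (r : ℝ) (hr : 0 < r) {δ : ℝ} (hδ : 0 < δ) {B : Set E3}
    (hB : MeasurableSet B) (hBs : ∀ x ∈ B, δ ≤ ‖x‖) (hfin : μH[2] B < ⊤) :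
    μH[2] (invMap r '' B) = ∫⁻ x in B, ENNReal.ofReal ((r^2/‖x‖^2)^2) ∂μH[2] := by
  set a := μH[2] (invMap r '' B) with ha
  set b := ∫⁻ x in B, ENNReal.ofReal ((r^2/‖x‖^2)^2) ∂μH[2] with hb
  have hbfin : b < ⊤ := by
    have hbound : b ≤ ENNReal.ofReal ((r^2/δ^2)^2) * μH[2] B := by
      rw [hb, ← setLIntegral_const B _]
      apply setLIntegral_mono' hB
      intro x hx
      apply ENNReal.ofReal_le_ofReal
      have hx0 : (0:ℝ) < ‖x‖ := lt_of_lt_of_le hδ (hBs x hx)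
      have h4 : r^2/‖x‖^2 ≤ r^2/δ^2 := by
        apply div_le_div_of_nonneg_left (by positivity) (by positivity)
        nlinarith [hBs x hx]
      nlinarith [div_nonneg (sq_nonneg r) (sq_nonneg ‖x‖)]
    exact lt_of_le_of_lt hbound (ENNReal.mul_lt_top ENNReal.ofReal_lt_top hfin)
  have hafin : a < ⊤ := by
    have h := (key_estimate r hr hδ hB hBs one_pos).1
    exact lt_of_le_of_lt h (ENNReal.mul_lt_top ENNReal.ofReal_lt_top hbfin)
  -- real versions
  have key : ∀ n : ℕ, a.toReal ≤ (1 + 1/(n+1))^4 * b.toReal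
      ∧ b.toReal ≤ (1 + 1/(n+1))^4 * a.toReal := by
    intro n
    have hεpos : (0:ℝ) < 1/(n+1) := by positivity
    obtain ⟨h1, h2⟩ := key_estimate r hr hδ hB hBs hεpos
    constructor
    · have := ENNReal.toReal_mono
        (ENNReal.mul_ne_top ENNReal.ofReal_ne_top hbfin.ne) h1
      rwa [ENNReal.toReal_mul, ENNReal.toReal_ofReal (by positivity)] at this
    · have := ENNReal.toReal_mono
        (ENNReal.mul_ne_top ENNReal.ofReal_ne_top hafin.ne) h2
      rwa [ENNReal.toReal_mul, ENNReal.toReal_ofReal (by positivity)] at this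
  have hlim : Filter.Tendsto (fun n : ℕ => ((1:ℝ) + 1/(n+1))^4) Filter.atTop (nhds 1) := by
    have h0 : Filter.Tendsto (fun n : ℕ => (1:ℝ)/(n+1)) Filter.atTop (nhds 0) :=
      tendsto_one_div_add_atTop_nhds_zero_nat
    have h1 : Filter.Tendsto (fun n : ℕ => (1:ℝ) + 1/(n+1)) Filter.atTop (nhds 1) := by
      have := Filter.Tendsto.const_add (1:ℝ) h0
      simpa using this
    have := h1.pow 4
    simpa using this
  have hab : a.toReal ≤ b.toReal := by
    have hl : Filter.Tendsto (fun n : ℕ => ((1:ℝ) + 1/(n+1))^4 * b.toReal)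
        Filter.atTop (nhds b.toReal) := by simpa using hlim.mul_const b.toReal
    exact ge_of_tendsto' hl (fun n => (key n).1)
  have hba : b.toReal ≤ a.toReal := by
    have hl : Filter.Tendsto (fun n : ℕ => ((1:ℝ) + 1/(n+1))^4 * a.toReal)
        Filter.atTop (nhds a.toReal) := by simpa using hlim.mul_const a.toReal
    exact ge_of_tendsto' hl (fun n => (key n).2)
  have : a.toReal = b.toReal := le_antisymm hab hba
  exact (ENNReal.toReal_eq_toReal_iff' hafin.ne hbfin.ne).mp this

lemma measure_eq_map (r : ℝ) (hr : 0 < r) {δ : ℝ} (hδ : 0 < δ) {F : Set E3}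
    (hF : MeasurableSet F) (hFs : ∀ x ∈ F, δ ≤ ‖x‖) (hfin : μH[2] F < ⊤) :
    μH[2].restrict (invMap r '' F)
      = Measure.map (invMap r)
        ((μH[2].restrict F).withDensity (fun x => ENNReal.ofReal ((r^2/‖x‖^2)^2))) := by
  ext s hs
  rw [Measure.restrict_apply hs,
    Measure.map_apply (invMap_measurable r) hs,
    withDensity_apply _ (hs.preimage (invMap_measurable r)),
    Measure.restrict_restrict (hs.preimage (invMap_measurable r))]
  have hB : MeasurableSet (invMap r ⁻¹' s ∩ F) :=
    (hs.preimage (invMap_measurable r)).inter hF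
  have hBs : ∀ x ∈ invMap r ⁻¹' s ∩ F, δ ≤ ‖x‖ := fun x hx => hFs x hx.2
  have hBfin : μH[2] (invMap r ⁻¹' s ∩ F) < ⊤ :=
    lt_of_le_of_lt (measure_mono inter_subset_right) hfin
  rw [← key_coV r hr hδ hB hBs hBfin]
  congr 1
  rw [inter_comm (invMap r ⁻¹' s) F, Set.image_inter_preimage]
  exact inter_comm _ _

lemma Skernel_transform (r : ℝ) (hr : 0 < r) {x y : E3} (hx : x ≠ 0) (hy : y ≠ 0) (c : ℝ) :
    ((r^2/‖y‖^2)^2) * ((-1 / (4*π*‖invMap r x - invMap r y‖)) * (c * ‖y‖^3 / r^3))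
      = (‖x‖/r) * ((-1/(4*π*‖x-y‖)) * c) := by
  by_cases hxy : x = y
  · subst hxy
    simp
  · have hd : ‖x - y‖ ≠ 0 := by
      simp only [ne_eq, norm_eq_zero, sub_eq_zero]; exact hxy
    have hx' : (0:ℝ) < ‖x‖ := norm_pos_iff.mpr hx
    have hy' : (0:ℝ) < ‖y‖ := norm_pos_iff.mpr hy
    rw [invMap_dist r hr hx hy]
    have hπ : (π:ℝ) ≠ 0 := Real.pi_ne_zero
    field_simp

lemma Kkernel_transform (r : ℝ) (hr : 0 < r) {x y : E3} (hx : x ≠ 0) (hy : y ≠ 0)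
    (ν : E3) (c : ℝ) :
    ((r^2/‖y‖^2)^2) *
      (⟪ν - (2*⟪x, ν⟫/‖x‖^2) • x,
          (4*π*‖invMap r x - invMap r y‖^3)⁻¹ • (invMap r x - invMap r y)⟫ * (c*‖y‖^3/r^3))
      = (‖x‖^3/r^3) * (⟪ν, (4*π*‖x-y‖^3)⁻¹ • (x-y)⟫ * c)
        + (‖x‖*⟪x, ν⟫/r^3) * ((-1/(4*π*‖x-y‖)) * c) := by
  by_cases hxy : x = y
  · subst hxy
    simp
  · have hd : ‖x - y‖ ≠ 0 := by
      simp only [ne_eq, norm_eq_zero, sub_eq_zero]; exact hxy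
    have hx' : (0:ℝ) < ‖x‖ := norm_pos_iff.mpr hx
    have hy' : (0:ℝ) < ‖y‖ := norm_pos_iff.mpr hy
    have hπ : (π:ℝ) ≠ 0 := Real.pi_ne_zero
    rw [real_inner_smul_right, real_inner_smul_right]
    have hIP : ⟪ν - (2*⟪x, ν⟫/‖x‖^2) • x, invMap r x - invMap r y⟫
        = r^2*((⟪ν, x⟫ - ⟪ν, y⟫)/‖y‖^2
            - ⟪x, ν⟫*(‖x‖^2 - 2*⟪x, y⟫ + ‖y‖^2)/(‖x‖^2*‖y‖^2)) := by
      simp only [invMap, inner_sub_left, inner_sub_right, real_inner_smul_left,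
        real_inner_smul_right, real_inner_self_eq_norm_sq]
      rw [real_inner_comm y x, real_inner_comm x ν, real_inner_comm y ν]
      field_simp
      ring
    rw [hIP, invMap_dist r hr hx hy, inner_sub_right]
    rw [real_inner_comm x ν]
    have hixy : ⟪x, y⟫ = (‖x‖^2 + ‖y‖^2 - ‖x-y‖^2)/2 := by
      have := norm_sub_sq_real x y
      linarith
    rw [hixy]
    field_simp
    ring

end

open MeasureTheory
open scoped Real RealInnerProductSpace ENNReal

/-- Proposition 3.2(ii): if `0 ∉ closure Ω`, then
`⟨K**[φ*], φ*⟩_{∂Ω*} − ⟨K*[φ], φ⟩_{∂Ω} = −∫_{∂Ω} (x·ν_x/|x|²)|S[φ](x)|² dσ`,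
where `⟨φ, ψ⟩ = −∫ φ S[ψ] dσ`, `Γ(z) = −1/(4π|z|)`, `∇Γ(z) = z/(4π|z|³)`,
`φ*(Ty) = φ(y)|y|³/r³`, and `ν*(Tx) = R_x ν(x)`. -/
theorem np_inversion_quadratic_form_exterior_dim3
    (r : ℝ) (hr : 0 < r) (Ω : Set (EuclideanSpace ℝ (Fin 3)))
    (hopen : IsOpen Ω) (hbd : Bornology.IsBounded Ω) (h0 : (0 : EuclideanSpace ℝ (Fin 3)) ∉ closure Ω)
    (T : EuclideanSpace ℝ (Fin 3) → EuclideanSpace ℝ (Fin 3))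
    (hT : ∀ x : EuclideanSpace ℝ (Fin 3), x ≠ 0 → T x = (r ^ 2 / ‖x‖ ^ 2) • x)
    (σ σs : Measure (EuclideanSpace ℝ (Fin 3)))
    (hσ : σ = μH[2].restrict (frontier Ω))
    (hσs : σs = μH[2].restrict (T '' frontier Ω))
    (hfin : σ (frontier Ω) < ⊤)
    (R : EuclideanSpace ℝ (Fin 3) → EuclideanSpace ℝ (Fin 3) → EuclideanSpace ℝ (Fin 3))
    (hR : ∀ x v : EuclideanSpace ℝ (Fin 3), x ≠ 0 →
      R x v = v - (2 * ⟪x, v⟫ / ‖x‖ ^ 2) • x)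
    (ν νs : EuclideanSpace ℝ (Fin 3) → EuclideanSpace ℝ (Fin 3))
    (hνs : ∀ x ∈ frontier Ω, νs (T x) = R x (ν x))
    (φ : EuclideanSpace ℝ (Fin 3) → ℝ) (hφmeas : Measurable φ)
    (hφbdd : ∃ C, ∀ y, |φ y| ≤ C)
    (φs : EuclideanSpace ℝ (Fin 3) → ℝ)
    (hφs : ∀ y ∈ frontier Ω, φs (T y) = φ y * ‖y‖ ^ 3 / r ^ 3)
    -- the single layer potential and NP operator on ∂Ω
    (S K : EuclideanSpace ℝ (Fin 3) → ℝ)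
    (hS : ∀ x, S x = ∫ y, (-1 / (4 * π * ‖x - y‖)) * φ y ∂σ)
    (hK : ∀ x, K x = ∫ y, ⟪ν x, (4 * π * ‖x - y‖ ^ 3)⁻¹ • (x - y)⟫ * φ y ∂σ)
    -- the single layer potential and NP operator on ∂Ω*
    (Ss Ks : EuclideanSpace ℝ (Fin 3) → ℝ)
    (hSs : ∀ w, Ss w = ∫ z, (-1 / (4 * π * ‖w - z‖)) * φs z ∂σs)
    (hKs : ∀ w, Ks w = ∫ z, ⟪νs w, (4 * π * ‖w - z‖ ^ 3)⁻¹ • (w - z)⟫ * φs z ∂σs)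
    -- integrability of the integrands at a.e. base point
    (hae1 : ∀ᵐ x ∂σ, Integrable (fun y => (-1 / (4 * π * ‖x - y‖)) * φ y) σ)
    (hae2 : ∀ᵐ x ∂σ,
      Integrable (fun y => ⟪ν x, (4 * π * ‖x - y‖ ^ 3)⁻¹ • (x - y)⟫ * φ y) σ)
    (hae3 : ∀ᵐ w ∂σs, Integrable (fun z => (-1 / (4 * π * ‖w - z‖)) * φs z) σs)
    (hae4 : ∀ᵐ w ∂σs,
      Integrable (fun z => ⟪νs w, (4 * π * ‖w - z‖ ^ 3)⁻¹ • (w - z)⟫ * φs z) σs)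
    -- integrability of the products
    (hKS : Integrable (fun x => K x * S x) σ)
    (hKsSs : Integrable (fun w => Ks w * Ss w) σs)
    (hq : Integrable (fun x => (⟪x, ν x⟫ / ‖x‖ ^ 2) * (S x) ^ 2) σ) :
    -(∫ w, Ks w * Ss w ∂σs) + ∫ x, K x * S x ∂σ =
      -∫ x, (⟪x, ν x⟫ / ‖x‖ ^ 2) * (S x) ^ 2 ∂σ := by
  classical
  set F := frontier Ω with hFdef
  have hFmeas : MeasurableSet F := isClosed_frontier.measurableSet
  obtain ⟨δ, hδ0, hδF⟩ : ∃ δ > 0, ∀ x ∈ F, δ ≤ ‖x‖ := by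
    have hop : IsOpen (closure Ω)ᶜ := isClosed_closure.isOpen_compl
    obtain ⟨δ, hδ0, hball⟩ := Metric.isOpen_iff.mp hop 0 h0
    refine ⟨δ, hδ0, fun x hx => ?_⟩
    by_contra hcon
    push_neg at hcon
    have hxball : x ∈ Metric.ball (0 : EuclideanSpace ℝ (Fin 3)) δ :=
      mem_ball_zero_iff.mpr hcon
    exact (hball hxball) (frontier_subset_closure hx)
  have hFne0 : ∀ x ∈ F, x ≠ 0 := by
    intro x hx h
    have hxn := hδF x hx
    rw [h, norm_zero] at hxn
    linarith
  have hTF : ∀ x ∈ F, T x = invMap r x := fun x hx => hT x (hFne0 x hx)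
  have himg : T '' F = invMap r '' F := image_congr hTF
  have hfinH : μH[2] F < ⊤ := by
    have := hfin
    rw [hσ, Measure.restrict_apply_self] at this
    exact this
  set w : EuclideanSpace ℝ (Fin 3) → ℝ≥0 :=
    fun x => Real.toNNReal ((r^2/‖x‖^2)^2) with hwdef
  have hwR : ∀ y, ((w y : ℝ)) = (r^2/‖y‖^2)^2 :=
    fun y => Real.coe_toNNReal _ (by positivity)
  have hwmeas : Measurable w := by
    apply Measurable.real_toNNReal
    apply Measurable.pow _ measurable_const
    exact measurable_const.div (measurable_norm.pow measurable_const)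
  have hmap : σs = Measure.map (invMap r) (σ.withDensity (fun x => (w x : ℝ≥0∞))) := by
    rw [hσs, himg, hσ]
    have hfn : (fun x : EuclideanSpace ℝ (Fin 3) => ((w x : ℝ≥0∞)))
        = fun x => ENNReal.ofReal ((r^2/‖x‖^2)^2) := by
      funext x; rfl
    rw [hfn]
    exact measure_eq_map r hr hδ0 hFmeas hδF hfinH
  have haeF : ∀ᵐ x ∂σ, x ∈ F := by
    rw [hσ]; exact ae_restrict_mem hFmeas
  have hac : σ ≪ σ.withDensity (fun x => (w x : ℝ≥0∞)) := by
    apply withDensity_absolutelyContinuous' hwmeas.coe_nnreal_ennreal.aemeasurable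
    filter_upwards [haeF] with x hx
    have hx' : (0:ℝ) < ‖x‖ := lt_of_lt_of_le hδ0 (hδF x hx)
    have hpos : (0:ℝ) < (r^2/‖x‖^2)^2 := by positivity
    simp only [ne_eq, ENNReal.coe_eq_zero]
    intro hzero
    rw [hwdef] at hzero
    simp only [Real.toNNReal_eq_zero] at hzero
    linarith
  have htrans : ∀ (p : EuclideanSpace ℝ (Fin 3) → Prop),
      (∀ᵐ z ∂σs, p z) → (∀ᵐ x ∂σ, p (invMap r x)) := by
    intro p hp
    rw [hmap] at hp
    have h2 := ae_of_ae_map (invMap_measurable r).aemeasurable hp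
    exact Filter.Eventually.filter_mono hac.ae_le h2
  have hint : ∀ (f : EuclideanSpace ℝ (Fin 3) → ℝ), AEStronglyMeasurable f σs →
      ∫ z, f z ∂σs = ∫ x, ((w x : ℝ)) * f (invMap r x) ∂σ := by
    intro f hf
    rw [hmap] at hf ⊢
    rw [integral_map (invMap_measurable r).aemeasurable hf]
    rw [integral_withDensity_eq_integral_smul hwmeas]
    simp only [NNReal.smul_def, smul_eq_mul]
  -- pointwise identity for Ss
  have hSpt : ∀ᵐ x ∂σ, Ss (invMap r x) = (‖x‖/r) * S x := by
    filter_upwards [haeF, htrans _ hae3] with x hxF hint3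
    rw [hSs (invMap r x), hint _ hint3.aestronglyMeasurable, hS x, ← integral_const_mul]
    apply integral_congr_ae
    filter_upwards [haeF] with y hyF
    have hφsy : φs (invMap r y) = φ y * ‖y‖^3 / r^3 := by
      rw [← hTF y hyF]; exact hφs y hyF
    rw [hφsy, hwR y]
    exact Skernel_transform r hr (hFne0 x hxF) (hFne0 y hyF) (φ y)
  -- pointwise identity for Ks
  have hKpt : ∀ᵐ x ∂σ, Ks (invMap r x)
      = (‖x‖^3/r^3) * K x + (‖x‖*⟪x, ν x⟫/r^3) * S x := by
    filter_upwards [haeF, htrans _ hae4, hae1, hae2] with x hxF hint4 h1 h2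
    rw [hKs (invMap r x), hint _ hint4.aestronglyMeasurable]
    have hνsx : νs (invMap r x) = ν x - (2*⟪x, ν x⟫/‖x‖^2) • x := by
      rw [← hTF x hxF, hνs x hxF, hR x (ν x) (hFne0 x hxF)]
    have hcongr : (fun y => ((w y : ℝ)) *
          (⟪νs (invMap r x), (4*π*‖invMap r x - invMap r y‖^3)⁻¹ •
            (invMap r x - invMap r y)⟫ * φs (invMap r y)))
        =ᵐ[σ] fun y => (‖x‖^3/r^3) * (⟪ν x, (4*π*‖x-y‖^3)⁻¹ • (x-y)⟫ * φ y)
          + (‖x‖*⟪x, ν x⟫/r^3) * ((-1/(4*π*‖x-y‖)) * φ y) := by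
      filter_upwards [haeF] with y hyF
      have hφsy : φs (invMap r y) = φ y * ‖y‖^3 / r^3 := by
        rw [← hTF y hyF]; exact hφs y hyF
      rw [hφsy, hνsx, hwR y]
      exact Kkernel_transform r hr (hFne0 x hxF) (hFne0 y hyF) (ν x) (φ y)
    rw [integral_congr_ae hcongr,
      integral_add (h2.const_mul _) (h1.const_mul _),
      integral_const_mul, integral_const_mul, ← hK x, ← hS x]
  -- main computation
  have hmain : ∫ z, Ks z * Ss z ∂σs
      = (∫ x, K x * S x ∂σ) + ∫ x, (⟪x, ν x⟫/‖x‖^2) * (S x)^2 ∂σ := by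
    rw [hint _ hKsSs.aestronglyMeasurable]
    have hcongr2 : (fun x => ((w x : ℝ)) * (Ks (invMap r x) * Ss (invMap r x)))
        =ᵐ[σ] fun x => K x * S x + (⟪x, ν x⟫/‖x‖^2) * (S x)^2 := by
      filter_upwards [haeF, hSpt, hKpt] with x hxF hSx hKx
      rw [hSx, hKx, hwR x]
      have hx' : (0:ℝ) < ‖x‖ := lt_of_lt_of_le hδ0 (hδF x hxF)
      have hr' : r ≠ 0 := hr.ne'
      field_simp
    rw [integral_congr_ae hcongr2, integral_add hKS hq]
  rw [hmain]
  ring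
end

section
/- (Eigenvalue transfer under inversion, 2D interior case.) Let Ω ⊆ ℝ² be a bounded open set with 0 ∈ Ω, r > 0, T the inversion in the sphere of radius r centered at the origin, σ the 1-dimensional Hausdorff measure restricted to ∂Ω, σ* the 1-dimensional Hausdorff measure restricted to ∂Ω* := T(∂Ω), ν : ℝ² → ℝ² any map with ν*(T x) := −R_x ν(x), and φ : ℝ² → ℝ bounded Borel measurable with σ(∂Ω) < ∞ and φ*(T y) := φ(y)|y|²/r². Suppose ∫_{∂Ω} φ dσ = 0 and there is λ ∈ ℝ such that for every x ∈ ∂Ω the function y ↦ ⟨ν(x), ∇Γ(x−y)⟩φ(y) is σ-integrable and ∫_{∂Ω} ⟨ν(x), ∇Γ(x−y)⟩ φ(y) dσ(y) = λ φ(x). Then for every x ∈ ∂Ω, ∫_{∂Ω*} ⟨ν*(Tx), ∇Γ(Tx − z)⟩ φ*(z) dσ*(z) = −λ φ*(Tx); that is, φ* is an eigenfunction of the Neumann–Poincaré-type operator on ∂Ω* with eigenvalue −λ. Here ∇Γ(z) = z/(2π|z|²). -/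
open MeasureTheory
open scoped Real RealInnerProductSpace ENNReal

section NPAux

open Set
open scoped NNReal

noncomputable section

abbrev E2 := EuclideanSpace ℝ (Fin 2)

/-- The inversion map in the sphere of radius `r`. -/
def npInv (r : ℝ) (y : E2) : E2 := (r ^ 2 / ‖y‖ ^ 2) • y

lemma npInv_measurable (r : ℝ) : Measurable (npInv r) := by
  apply Measurable.smul (measurable_const.div ((measurable_norm).pow_const 2)) measurable_id

lemma norm_npInv (r : ℝ) (hr : 0 < r) {y : E2} (hy : y ≠ 0) :
    ‖npInv r y‖ = r ^ 2 / ‖y‖ := by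
  have hny : (0:ℝ) < ‖y‖ := norm_pos_iff.2 hy
  rw [npInv, norm_smul, Real.norm_eq_abs, abs_of_nonneg (by positivity)]
  field_simp

lemma npInv_npInv (r : ℝ) (hr : 0 < r) (y : E2) : npInv r (npInv r y) = y := by
  rcases eq_or_ne y 0 with h | h
  · simp [npInv, h]
  · have hny : (0:ℝ) < ‖y‖ := norm_pos_iff.2 h
    rw [npInv, norm_npInv r hr h, npInv, smul_smul]
    have : r ^ 2 / (r ^ 2 / ‖y‖) ^ 2 * (r ^ 2 / ‖y‖ ^ 2) = 1 := by
      field_simp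
    rw [this, one_smul]

lemma npInv_image_eq_preimage (r : ℝ) (hr : 0 < r) (A : Set E2) :
    npInv r '' A = npInv r ⁻¹' A :=
  congrFun (Set.image_eq_preimage_of_inverse (npInv_npInv r hr) (npInv_npInv r hr)) A

lemma dist_npInv (r : ℝ) (hr : 0 < r) {y z : E2} (hy : y ≠ 0) (hz : z ≠ 0) :
    ‖npInv r y - npInv r z‖ = r ^ 2 * ‖y - z‖ / (‖y‖ * ‖z‖) := by
  have hny : (0:ℝ) < ‖y‖ := norm_pos_iff.2 hy
  have hnz : (0:ℝ) < ‖z‖ := norm_pos_iff.2 hz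
  have hsq : ‖npInv r y - npInv r z‖ ^ 2 = (r ^ 2 * ‖y - z‖ / (‖y‖ * ‖z‖)) ^ 2 := by
    have h1 : ‖npInv r y - npInv r z‖ ^ 2
        = ‖npInv r y‖ ^ 2 - 2 * ⟪npInv r y, npInv r z⟫ + ‖npInv r z‖ ^ 2 :=
      norm_sub_sq_real _ _
    have h2 : ‖y - z‖ ^ 2 = ‖y‖ ^ 2 - 2 * ⟪y, z⟫ + ‖z‖ ^ 2 := norm_sub_sq_real _ _
    have h3 : ⟪npInv r y, npInv r z⟫ = (r ^ 2 / ‖y‖ ^ 2) * ((r ^ 2 / ‖z‖ ^ 2) * ⟪y, z⟫) := by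
      rw [npInv, npInv, real_inner_smul_left, real_inner_smul_right]
    rw [h1, h3, norm_npInv r hr hy, norm_npInv r hr hz]
    have h2' : ⟪y, z⟫ = (‖y‖ ^ 2 + ‖z‖ ^ 2 - ‖y - z‖ ^ 2) / 2 := by
      rw [h2]; ring
    rw [h2']
    field_simp
    ring
  have h4 : (0:ℝ) ≤ ‖npInv r y - npInv r z‖ := norm_nonneg _
  have h5 : (0:ℝ) ≤ r ^ 2 * ‖y - z‖ / (‖y‖ * ‖z‖) := by positivity
  nlinarith [hsq, h4, h5]


lemma npInv_band_upper (r s : ℝ) (hr : 0 < r) (hs : 0 < s) (S : Set E2)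
    (hS : ∀ y ∈ S, s ≤ ‖y‖) :
    μH[1] (npInv r '' S) ≤ ENNReal.ofReal (r ^ 2 / s ^ 2) * μH[1] S := by
  have hl : LipschitzOnWith (Real.toNNReal (r ^ 2 / s ^ 2)) (npInv r) S := by
    apply LipschitzOnWith.of_dist_le_mul
    intro y hy z hz
    have hys : s ≤ ‖y‖ := hS y hy
    have hzs : s ≤ ‖z‖ := hS z hz
    have hy0 : y ≠ 0 := by intro h; rw [h, norm_zero] at hys; linarith
    have hz0 : z ≠ 0 := by intro h; rw [h, norm_zero] at hzs; linarith
    rw [dist_eq_norm, dist_eq_norm, dist_npInv r hr hy0 hz0,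
      Real.coe_toNNReal _ (by positivity)]
    have h1 : s ^ 2 ≤ ‖y‖ * ‖z‖ := by nlinarith
    calc r ^ 2 * ‖y - z‖ / (‖y‖ * ‖z‖) ≤ r ^ 2 * ‖y - z‖ / s ^ 2 :=
          div_le_div_of_nonneg_left (by positivity) (by positivity) h1
      _ = r ^ 2 / s ^ 2 * ‖y - z‖ := by ring
  have := hl.hausdorffMeasure_image_le (le_of_lt one_pos)
  simpa [ENNReal.rpow_one, ENNReal.ofReal] using this

lemma npInv_band_lower (r s t : ℝ) (hr : 0 < r) (hs : 0 < s) (S : Set E2)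
    (hS : ∀ y ∈ S, s ≤ ‖y‖ ∧ ‖y‖ ≤ t) :
    μH[1] S ≤ ENNReal.ofReal (t ^ 2 / r ^ 2) * μH[1] (npInv r '' S) := by
  rcases Set.eq_empty_or_nonempty S with h | ⟨y₀, hy₀⟩
  · simp [h]
  have hst : 0 < t := lt_of_lt_of_le hs (le_trans (hS y₀ hy₀).1 (hS y₀ hy₀).2)
  have hne : ∀ y ∈ S, y ≠ 0 := by
    intro y hy h
    have := (hS y hy).1; rw [h, norm_zero] at this; linarith
  have hl : LipschitzOnWith (Real.toNNReal (t ^ 2 / r ^ 2)) (npInv r) (npInv r '' S) := by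
    apply LipschitzOnWith.of_dist_le_mul
    rintro _ ⟨y, hy, rfl⟩ _ ⟨z, hz, rfl⟩
    have hy0 := hne y hy; have hz0 := hne z hz
    have hny : (0:ℝ) < ‖y‖ := norm_pos_iff.2 hy0
    have hnz : (0:ℝ) < ‖z‖ := norm_pos_iff.2 hz0
    rw [dist_eq_norm, dist_eq_norm, npInv_npInv r hr, npInv_npInv r hr,
      dist_npInv r hr hy0 hz0, Real.coe_toNNReal _ (by positivity)]
    have h1 : ‖y‖ * ‖z‖ ≤ t ^ 2 := by nlinarith [(hS y hy).2, (hS z hz).2]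
    have h2 : ‖y - z‖ * (‖y‖ * ‖z‖) ≤ ‖y - z‖ * t ^ 2 :=
      mul_le_mul_of_nonneg_left h1 (norm_nonneg _)
    have h3 : t ^ 2 / r ^ 2 * (r ^ 2 * ‖y - z‖ / (‖y‖ * ‖z‖)) = t ^ 2 * ‖y - z‖ / (‖y‖ * ‖z‖) := by
      field_simp
    rw [h3, le_div_iff₀ (by positivity)]
    nlinarith [h2]
  have h2 := hl.hausdorffMeasure_image_le (le_of_lt one_pos)
  have h3 : npInv r '' (npInv r '' S) = S := by
    rw [Set.image_image]
    rw [Set.image_congr (g := id) (fun y _ => npInv_npInv r hr y), Set.image_id]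
  rw [h3] at h2
  simpa [ENNReal.rpow_one, ENNReal.ofReal] using h2


lemma w_measurable (r : ℝ) :
    Measurable (fun y : E2 => ENNReal.ofReal (r ^ 2 / ‖y‖ ^ 2)) :=
  ENNReal.measurable_ofReal.comp (measurable_const.div ((measurable_norm).pow_const 2))

set_option maxHeartbeats 1000000 in
lemma npInv_measure_image (r a b : ℝ) (hr : 0 < r) (ha : 0 < a) (hab : a ≤ b)
    (B : Set E2) (hB : MeasurableSet B)
    (hBsub : ∀ y ∈ B, a ≤ ‖y‖ ∧ ‖y‖ ≤ b) (hBfin : μH[1] B < ⊤) :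
    μH[1] (npInv r '' B) = ∫⁻ y in B, ENNReal.ofReal (r ^ 2 / ‖y‖ ^ 2) ∂μH[1] := by
  set w : E2 → ℝ≥0∞ := fun y => ENNReal.ofReal (r ^ 2 / ‖y‖ ^ 2) with hw
  set ω : Measure E2 := μH[1].withDensity w with hω
  have hRHS : ∫⁻ y in B, ENNReal.ofReal (r ^ 2 / ‖y‖ ^ 2) ∂μH[1] = ω B :=
    (withDensity_apply w hB).symm
  rw [hRHS]
  set c : ℝ := r ^ 2 * (b + 1 - a) * (2 * (2 * b + 2)) / a ^ 4 with hc
  have hc0 : 0 ≤ c := by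
    rw [hc]; apply div_nonneg _ (by positivity)
    apply mul_nonneg (mul_nonneg (by positivity) (by linarith)) (by linarith)
  have key : ∀ n : ℕ,
      μH[1] (npInv r '' B) ≤ ω B + ENNReal.ofReal (c / ((n : ℝ) + 1)) * μH[1] B ∧
      ω B ≤ μH[1] (npInv r '' B) + ENNReal.ofReal (c / ((n : ℝ) + 1)) * μH[1] B := by
    intro n
    set N : ℕ := n + 1 with hN
    have hNR : ((N : ℝ)) = (n : ℝ) + 1 := by rw [hN]; push_cast; ring
    have hN0 : (0 : ℝ) < N := by rw [hNR]; positivity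
    set h : ℝ := (b + 1 - a) / N with hh
    have hh0 : 0 < h := by
      rw [hh]; apply div_pos (by linarith) hN0
    set s : ℕ → ℝ := fun i => a + i * h with hs
    have hsa : ∀ i : ℕ, a ≤ s i := by
      intro i; rw [hs]; simp only []
      nlinarith [Nat.cast_nonneg (α := ℝ) i, hh0.le]
    set Bi : ℕ → Set E2 := fun i => B ∩ {y | s i ≤ ‖y‖ ∧ ‖y‖ < s i + h} with hBi
    have hBimeas : ∀ i, MeasurableSet (Bi i) := by
      intro i
      exact hB.inter ((measurableSet_le measurable_const measurable_norm).inter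
        (measurableSet_lt measurable_norm measurable_const))
    have hditsjoint : ∀ y : E2, ∀ i j : ℕ, i < j → y ∈ Bi i → y ∈ Bi j → False := by
      intro y i j hij hyi hyj
      have h1 : ‖y‖ < s i + h := hyi.2.2
      have h2 : s j ≤ ‖y‖ := hyj.2.1
      have : s i + h ≤ s j := by
        rw [hs]; simp only []
        have : (i : ℝ) + 1 ≤ j := by exact_mod_cast hij
        nlinarith [hh0.le]
      linarith
    have hcup : B = ⋃ i ∈ Finset.range N, Bi i := by
      ext y
      constructor
      · intro hy
        have hya := (hBsub y hy).1
        have hyb := (hBsub y hy).2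
        set u : ℝ := ‖y‖ with hu
        have hu0 : 0 ≤ (u - a) / h := by
          apply div_nonneg (by linarith) hh0.le
        set i : ℕ := Nat.floor ((u - a) / h) with hi
        have hiN : i < N := by
          rw [hi]
          apply Nat.floor_lt hu0 |>.2
          rw [div_lt_iff₀ hh0]
          have : (N : ℝ) * h = b + 1 - a := by
            rw [hh]; field_simp
          nlinarith
        have hle : s i ≤ u := by
          have h1 := Nat.floor_le hu0
          rw [← hi] at h1
          have h2 : (i : ℝ) * h ≤ u - a := (le_div_iff₀ hh0).1 h1
          rw [hs]; simp only []
          linarith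
        have hlt : u < s i + h := by
          have := Nat.lt_floor_add_one ((u - a) / h)
          rw [← hi] at this
          rw [div_lt_iff₀ hh0] at this
          rw [hs]; simp only []
          nlinarith
        refine Set.mem_biUnion (Finset.mem_range.2 hiN) ⟨hy, hle, hlt⟩
      · intro hy
        simp only [Set.mem_iUnion] at hy
        rcases hy with ⟨i, _, hyi⟩
        exact hyi.1
    -- per band estimates
    have hband : ∀ i : ℕ,
        μH[1] (npInv r '' Bi i) ≤ ω (Bi i) + ENNReal.ofReal (c / N) * μH[1] (Bi i) ∧
        ω (Bi i) ≤ μH[1] (npInv r '' Bi i) + ENNReal.ofReal (c / N) * μH[1] (Bi i) := by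
      intro i
      rcases Set.eq_empty_or_nonempty (Bi i) with hE | ⟨y₀, hy₀⟩
      · rw [hE]; simp
      have hsi : 0 < s i := lt_of_lt_of_le ha (hsa i)
      have hsub1 : ∀ y ∈ Bi i, s i ≤ ‖y‖ := fun y hy => hy.2.1
      have hsub2 : ∀ y ∈ Bi i, s i ≤ ‖y‖ ∧ ‖y‖ ≤ s i + h := fun y hy => ⟨hy.2.1, hy.2.2.le⟩
      have hsib : s i ≤ b := le_trans (hsub1 y₀ hy₀) (hBsub y₀ hy₀.1).2
      have hhb : h ≤ b + 1 - a := by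
        rw [hh]
        calc (b + 1 - a) / (N : ℝ) ≤ (b + 1 - a) / 1 := by
              apply div_le_div_of_nonneg_left (by linarith) one_pos
              exact_mod_cast Nat.one_le_iff_ne_zero.2 (by omega)
          _ = b + 1 - a := div_one _
      set t : ℝ := s i + h with ht
      have hts : s i < t := by rw [ht]; linarith
      have htb : t ≤ 2 * b + 2 := by rw [ht]; linarith
      -- real bridging inequality
      have hbr : r ^ 2 / (s i) ^ 2 ≤ r ^ 2 / t ^ 2 + c / N := by
        have e1 : r ^ 2 / (s i) ^ 2 - r ^ 2 / t ^ 2 = r ^ 2 * (t ^ 2 - (s i) ^ 2) / ((s i) ^ 2 * t ^ 2) := by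
          rw [div_sub_div _ _ (pow_ne_zero 2 hsi.ne') (pow_ne_zero 2 (show (0:ℝ) < t by linarith).ne')]
          ring
        have e2 : t ^ 2 - (s i) ^ 2 ≤ h * (2 * (2 * b + 2)) := by nlinarith [hsa i, ha, hh0.le]
        have e3 : a ^ 4 ≤ (s i) ^ 2 * t ^ 2 := by
          have p1 : a ^ 2 ≤ (s i) ^ 2 := by nlinarith [hsa i, ha]
          have p2 : a ^ 2 ≤ t ^ 2 := by nlinarith [hsa i, ha, hts.le]
          nlinarith [p1, p2, sq_nonneg a, ha]
        have e4 : r ^ 2 * (t ^ 2 - (s i) ^ 2) / ((s i) ^ 2 * t ^ 2)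
            ≤ r ^ 2 * (h * (2 * (2 * b + 2))) / a ^ 4 := by
          have n1 : 0 ≤ r ^ 2 * (h * (2 * (2 * b + 2))) :=
            mul_nonneg (by positivity) (mul_nonneg hh0.le (by linarith))
          have n2 : r ^ 2 * (t ^ 2 - (s i) ^ 2) ≤ r ^ 2 * (h * (2 * (2 * b + 2))) :=
            mul_le_mul_of_nonneg_left e2 (by positivity)
          exact div_le_div₀ n1 n2 (by positivity) e3
        have e5 : r ^ 2 * (h * (2 * (2 * b + 2))) / a ^ 4 = c / N := by
          rw [hc, hh]; field_simp
        linarith [e1 ▸ e4, e5 ▸ e4]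
      have hbrE : ENNReal.ofReal (r ^ 2 / (s i) ^ 2)
          ≤ ENNReal.ofReal (r ^ 2 / t ^ 2) + ENNReal.ofReal (c / N) := by
        calc ENNReal.ofReal (r ^ 2 / (s i) ^ 2) ≤ ENNReal.ofReal (r ^ 2 / t ^ 2 + c / N) :=
              ENNReal.ofReal_le_ofReal hbr
          _ = _ := ENNReal.ofReal_add (by positivity) (div_nonneg hc0 hN0.le)
      -- image measure bounds
      have u1 : μH[1] (npInv r '' Bi i) ≤ ENNReal.ofReal (r ^ 2 / (s i) ^ 2) * μH[1] (Bi i) :=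
        npInv_band_upper r (s i) hr hsi (Bi i) hsub1
      have l1 : μH[1] (Bi i) ≤ ENNReal.ofReal (t ^ 2 / r ^ 2) * μH[1] (npInv r '' Bi i) :=
        npInv_band_lower r (s i) t hr hsi (Bi i) hsub2
      have l1' : ENNReal.ofReal (r ^ 2 / t ^ 2) * μH[1] (Bi i) ≤ μH[1] (npInv r '' Bi i) := by
        calc ENNReal.ofReal (r ^ 2 / t ^ 2) * μH[1] (Bi i)
            ≤ ENNReal.ofReal (r ^ 2 / t ^ 2) * (ENNReal.ofReal (t ^ 2 / r ^ 2) * μH[1] (npInv r '' Bi i)) :=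
              mul_le_mul_right l1 _
          _ = (ENNReal.ofReal (r ^ 2 / t ^ 2) * ENNReal.ofReal (t ^ 2 / r ^ 2)) * μH[1] (npInv r '' Bi i) :=
              (mul_assoc _ _ _).symm
          _ = 1 * μH[1] (npInv r '' Bi i) := by
              rw [← ENNReal.ofReal_mul (by positivity)]
              congr 1
              rw [show r ^ 2 / t ^ 2 * (t ^ 2 / r ^ 2) = 1 by
                have ht0 : t ≠ 0 := (show (0:ℝ) < t by linarith).ne'; field_simp]
              exact ENNReal.ofReal_one
          _ = μH[1] (npInv r '' Bi i) := one_mul _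
      -- density measure bounds
      have wB : ω (Bi i) = ∫⁻ y in Bi i, w y ∂μH[1] := withDensity_apply w (hBimeas i)
      have wup : ω (Bi i) ≤ ENNReal.ofReal (r ^ 2 / (s i) ^ 2) * μH[1] (Bi i) := by
        rw [wB, ← setLIntegral_const (Bi i) (ENNReal.ofReal (r ^ 2 / (s i) ^ 2))]
        apply setLIntegral_mono measurable_const
        intro y hy
        apply ENNReal.ofReal_le_ofReal
        apply div_le_div_of_nonneg_left (by positivity) (by positivity)
        have := hsub1 y hy
        nlinarith
      have wlo : ENNReal.ofReal (r ^ 2 / t ^ 2) * μH[1] (Bi i) ≤ ω (Bi i) := by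
        rw [wB, ← setLIntegral_const (Bi i) (ENNReal.ofReal (r ^ 2 / t ^ 2))]
        apply setLIntegral_mono (w_measurable r)
        intro y hy
        apply ENNReal.ofReal_le_ofReal
        apply div_le_div_of_nonneg_left (by positivity) _
        · have h1 := (hsub2 y hy).2
          have h2 := lt_of_lt_of_le hsi (hsub1 y hy)
          nlinarith
        · have h2 := lt_of_lt_of_le hsi (hsub1 y hy)
          positivity
      constructor
      · calc μH[1] (npInv r '' Bi i) ≤ ENNReal.ofReal (r ^ 2 / (s i) ^ 2) * μH[1] (Bi i) := u1
          _ ≤ (ENNReal.ofReal (r ^ 2 / t ^ 2) + ENNReal.ofReal (c / N)) * μH[1] (Bi i) :=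
              mul_le_mul_left hbrE _
          _ = ENNReal.ofReal (r ^ 2 / t ^ 2) * μH[1] (Bi i) + ENNReal.ofReal (c / N) * μH[1] (Bi i) := by
              rw [add_mul]
          _ ≤ ω (Bi i) + ENNReal.ofReal (c / N) * μH[1] (Bi i) := add_le_add_left wlo _
      · calc ω (Bi i) ≤ ENNReal.ofReal (r ^ 2 / (s i) ^ 2) * μH[1] (Bi i) := wup
          _ ≤ (ENNReal.ofReal (r ^ 2 / t ^ 2) + ENNReal.ofReal (c / N)) * μH[1] (Bi i) :=
              mul_le_mul_left hbrE _
          _ = ENNReal.ofReal (r ^ 2 / t ^ 2) * μH[1] (Bi i) + ENNReal.ofReal (c / N) * μH[1] (Bi i) := by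
              rw [add_mul]
          _ ≤ μH[1] (npInv r '' Bi i) + ENNReal.ofReal (c / N) * μH[1] (Bi i) := add_le_add_left l1' _
    -- summation
    have hpd : (↑(Finset.range N) : Set ℕ).PairwiseDisjoint Bi := by
      intro i _ j _ hij
      apply Set.disjoint_left.2
      intro y hyi hyj
      rcases hij.lt_or_gt with hl | hl
      · exact hditsjoint y i j hl hyi hyj
      · exact hditsjoint y j i hl hyj hyi
    have himg : μH[1] (npInv r '' B) = ∑ i ∈ Finset.range N, μH[1] (npInv r '' Bi i) := by
      have e0 : npInv r '' B = ⋃ i ∈ Finset.range N, npInv r ⁻¹' Bi i := by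
        rw [npInv_image_eq_preimage r hr, hcup]
        simp [Set.preimage_iUnion]
      rw [e0, measure_biUnion_finset]
      · apply Finset.sum_congr rfl
        intro i _
        rw [← npInv_image_eq_preimage r hr]
      · intro i hi j hj hij
        apply Set.disjoint_left.2
        intro y hyi hyj
        exact Set.disjoint_left.1 (hpd hi hj hij) hyi hyj
      · intro i _
        exact (npInv_measurable r) (hBimeas i)
    have hsum2 : ω B = ∑ i ∈ Finset.range N, ω (Bi i) := by
      conv_lhs => rw [hcup]
      exact measure_biUnion_finset hpd (fun i _ => hBimeas i)
    have hsum3 : μH[1] B = ∑ i ∈ Finset.range N, μH[1] (Bi i) := by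
      conv_lhs => rw [hcup]
      exact measure_biUnion_finset hpd (fun i _ => hBimeas i)
    have hcN : ENNReal.ofReal (c / ((n : ℝ) + 1)) = ENNReal.ofReal (c / N) := by
      rw [hNR]
    rw [hcN]
    constructor
    · rw [himg, hsum2, hsum3, Finset.mul_sum, ← Finset.sum_add_distrib]
      exact Finset.sum_le_sum fun i _ => (hband i).1
    · rw [himg, hsum2, hsum3, Finset.mul_sum, ← Finset.sum_add_distrib]
      exact Finset.sum_le_sum fun i _ => (hband i).2
  -- pass to the limit
  have hM : μH[1] B ≠ ⊤ := hBfin.ne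
  have himgfin : μH[1] (npInv r '' B) < ⊤ := by
    have := npInv_band_upper r a hr ha B (fun y hy => (hBsub y hy).1)
    apply lt_of_le_of_lt this
    exact ENNReal.mul_lt_top ENNReal.ofReal_lt_top hBfin
  have hωfin : ω B < ⊤ := by
    have : ω B ≤ ENNReal.ofReal (r ^ 2 / a ^ 2) * μH[1] B := by
      rw [hω, withDensity_apply w hB, ← setLIntegral_const B (ENNReal.ofReal (r ^ 2 / a ^ 2))]
      apply setLIntegral_mono measurable_const
      intro y hy
      apply ENNReal.ofReal_le_ofReal
      apply div_le_div_of_nonneg_left (by positivity) (by positivity)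
      have := (hBsub y hy).1
      nlinarith
    exact lt_of_le_of_lt this (ENNReal.mul_lt_top ENNReal.ofReal_lt_top hBfin)
  -- an epsilon argument
  have hsmall : ∀ ε : ℝ≥0, 0 < ε → ∃ n : ℕ, ENNReal.ofReal (c / ((n : ℝ) + 1)) * μH[1] B ≤ ε := by
    intro ε hε
    set M : ℝ := (μH[1] B).toReal with hMdef
    have hM0 : 0 ≤ M := ENNReal.toReal_nonneg
    obtain ⟨n, hn⟩ := exists_nat_ge (c * M / (ε : ℝ))
    refine ⟨n, ?_⟩
    have hBM : μH[1] B = ENNReal.ofReal M := by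
      rw [hMdef, ENNReal.ofReal_toReal hM]
    rw [hBM, ← ENNReal.ofReal_mul (by positivity)]
    have : ENNReal.ofReal (c / ((n:ℝ) + 1) * M) ≤ ENNReal.ofReal (ε : ℝ) := by
      apply ENNReal.ofReal_le_ofReal
      rw [div_mul_eq_mul_div, div_le_iff₀ (by positivity)]
      have hεpos : (0:ℝ) < ε := hε
      have h1 : c * M ≤ (ε : ℝ) * n := by
        rw [div_le_iff₀ hεpos] at hn
        nlinarith
      nlinarith [hεpos]
    calc ENNReal.ofReal (c / ((n:ℝ) + 1) * M) ≤ ENNReal.ofReal (ε : ℝ) := this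
      _ = (ε : ℝ≥0∞) := ENNReal.ofReal_coe_nnreal
  apply le_antisymm
  · apply ENNReal.le_of_forall_pos_le_add
    intro ε hε _
    obtain ⟨n, hn⟩ := hsmall ε hε
    exact le_trans (key n).1 (add_le_add_right hn _)
  · apply ENNReal.le_of_forall_pos_le_add
    intro ε hε _
    obtain ⟨n, hn⟩ := hsmall ε hε
    exact le_trans (key n).2 (add_le_add_right hn _)


set_option maxHeartbeats 1000000 in
lemma np_scalar_identity (r p nx ny A Bv C q : ℝ) (hr : 0 < r) (hp : 0 < p)
    (hnx : 0 < nx) (hny : 0 < ny) (hd : 0 < nx ^ 2 - 2 * C + ny ^ 2) :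
    r ^ 2 / ny ^ 2 *
      ((2 * p * (r ^ 4 * (nx ^ 2 - 2 * C + ny ^ 2) / (nx ^ 2 * ny ^ 2)))⁻¹ *
        (-(r ^ 2 / nx ^ 2 * A - r ^ 2 / ny ^ 2 * Bv) +
          2 * A / nx ^ 2 * (r ^ 2 / nx ^ 2 * nx ^ 2 - r ^ 2 / ny ^ 2 * C)) *
        (q * ny ^ 2 / r ^ 2)) =
    A / (2 * p * r ^ 2) * q -
      nx ^ 2 / r ^ 2 * ((2 * p * (nx ^ 2 - 2 * C + ny ^ 2))⁻¹ * (A - Bv) * q) := by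
  have h1 : nx ^ 2 - 2 * C + ny ^ 2 ≠ 0 := ne_of_gt hd
  field_simp
  ring

set_option maxHeartbeats 1000000 in
lemma np_kernel_identity (r : ℝ) (hr : 0 < r) (x y v : E2)
    (hx : x ≠ 0) (hy : y ≠ 0) (hxy : x ≠ y) (q : ℝ) :
    (r ^ 2 / ‖y‖ ^ 2) *
      (⟪-(v - (2 * ⟪x, v⟫ / ‖x‖ ^ 2) • x),
          (2 * π * ‖npInv r x - npInv r y‖ ^ 2)⁻¹ • (npInv r x - npInv r y)⟫ *
        (q * ‖y‖ ^ 2 / r ^ 2)) =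
      ⟪v, x⟫ / (2 * π * r ^ 2) * q -
        (‖x‖ ^ 2 / r ^ 2) * (⟪v, (2 * π * ‖x - y‖ ^ 2)⁻¹ • (x - y)⟫ * q) := by
  have hnx : (0:ℝ) < ‖x‖ := norm_pos_iff.2 hx
  have hny : (0:ℝ) < ‖y‖ := norm_pos_iff.2 hy
  have hnxy : (0:ℝ) < ‖x - y‖ := by
    rw [norm_pos_iff]; exact sub_ne_zero.2 hxy
  have hπ : (0:ℝ) < π := Real.pi_pos
  have hD : ‖npInv r x - npInv r y‖ ^ 2 = r ^ 4 * ‖x - y‖ ^ 2 / (‖x‖ ^ 2 * ‖y‖ ^ 2) := by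
    rw [dist_npInv r hr hx hy]
    field_simp
  -- expand the inner products into scalars
  have hIP : ⟪-(v - (2 * ⟪x, v⟫ / ‖x‖ ^ 2) • x), npInv r x - npInv r y⟫
      = -(r ^ 2 / ‖x‖ ^ 2 * ⟪v, x⟫ - r ^ 2 / ‖y‖ ^ 2 * ⟪v, y⟫)
        + (2 * ⟪x, v⟫ / ‖x‖ ^ 2) * (r ^ 2 / ‖x‖ ^ 2 * ⟪x, x⟫ - r ^ 2 / ‖y‖ ^ 2 * ⟪x, y⟫) := by
    rw [npInv, npInv]
    simp only [inner_neg_left, inner_sub_left, inner_sub_right, real_inner_smul_left,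
      real_inner_smul_right]
    ring
  have hIP2 : ⟪v, (2 * π * ‖x - y‖ ^ 2)⁻¹ • (x - y)⟫
      = (2 * π * ‖x - y‖ ^ 2)⁻¹ * (⟪v, x⟫ - ⟪v, y⟫) := by
    rw [real_inner_smul_right, inner_sub_right]
  have hIP1 : ⟪-(v - (2 * ⟪x, v⟫ / ‖x‖ ^ 2) • x),
      (2 * π * ‖npInv r x - npInv r y‖ ^ 2)⁻¹ • (npInv r x - npInv r y)⟫
      = (2 * π * ‖npInv r x - npInv r y‖ ^ 2)⁻¹ *
        (-(r ^ 2 / ‖x‖ ^ 2 * ⟪v, x⟫ - r ^ 2 / ‖y‖ ^ 2 * ⟪v, y⟫)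
          + (2 * ⟪x, v⟫ / ‖x‖ ^ 2) * (r ^ 2 / ‖x‖ ^ 2 * ⟪x, x⟫ - r ^ 2 / ‖y‖ ^ 2 * ⟪x, y⟫)) := by
    rw [real_inner_smul_right, hIP]
  have hxy2 : ‖x - y‖ ^ 2 = ‖x‖ ^ 2 - 2 * ⟪x, y⟫ + ‖y‖ ^ 2 := norm_sub_sq_real x y
  have hvc : ⟪x, v⟫ = ⟪v, x⟫ := real_inner_comm v x
  rw [hIP1, hIP2, hD, real_inner_self_eq_norm_sq, hvc, hxy2]
  exact np_scalar_identity r π ‖x‖ ‖y‖ ⟪v, x⟫ ⟪v, y⟫ ⟪x, y⟫ q hr hπ hnx hny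
    (by nlinarith [hnxy, hxy2])

end
end NPAux

set_option maxHeartbeats 1000000 in
/-- Eigenvalue transfer under inversion, 2D interior case: if `0 ∈ Ω`, `φ` has mean zero
on `∂Ω` and is an eigenfunction of the Neumann–Poincaré-type operator with eigenvalue `λ`,
then `φ*` is an eigenfunction of the Neumann–Poincaré-type operator on `∂Ω*` with
eigenvalue `−λ`. Here `∇Γ(z) = z/(2π|z|²)`, `φ*(Ty) = φ(y)|y|²/r²`,
and `ν*(Tx) = −R_x ν(x)`. -/
theorem np_eigenvalue_inversion_interior_dim2
    (r : ℝ) (hr : 0 < r) (Ω : Set (EuclideanSpace ℝ (Fin 2)))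
    (hopen : IsOpen Ω) (hbd : Bornology.IsBounded Ω) (h0 : (0 : EuclideanSpace ℝ (Fin 2)) ∈ Ω)
    (T : EuclideanSpace ℝ (Fin 2) → EuclideanSpace ℝ (Fin 2))
    (hT : ∀ x : EuclideanSpace ℝ (Fin 2), x ≠ 0 → T x = (r ^ 2 / ‖x‖ ^ 2) • x)
    (σ σs : Measure (EuclideanSpace ℝ (Fin 2)))
    (hσ : σ = μH[1].restrict (frontier Ω))
    (hσs : σs = μH[1].restrict (T '' frontier Ω))
    (hfin : σ (frontier Ω) < ⊤)
    (R : EuclideanSpace ℝ (Fin 2) → EuclideanSpace ℝ (Fin 2) → EuclideanSpace ℝ (Fin 2))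
    (hR : ∀ x v : EuclideanSpace ℝ (Fin 2), x ≠ 0 →
      R x v = v - (2 * ⟪x, v⟫ / ‖x‖ ^ 2) • x)
    (ν νs : EuclideanSpace ℝ (Fin 2) → EuclideanSpace ℝ (Fin 2))
    (hνs : ∀ x ∈ frontier Ω, νs (T x) = -(R x (ν x)))
    (φ : EuclideanSpace ℝ (Fin 2) → ℝ) (hφmeas : Measurable φ)
    (hφbdd : ∃ C, ∀ y, |φ y| ≤ C)
    (φs : EuclideanSpace ℝ (Fin 2) → ℝ)
    (hφs : ∀ y ∈ frontier Ω, φs (T y) = φ y * ‖y‖ ^ 2 / r ^ 2)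
    (hmean : ∫ y, φ y ∂σ = 0)
    (l : ℝ)
    (hint : ∀ x ∈ frontier Ω,
      Integrable (fun y => ⟪ν x, (2 * π * ‖x - y‖ ^ 2)⁻¹ • (x - y)⟫ * φ y) σ)
    (heig : ∀ x ∈ frontier Ω,
      ∫ y, ⟪ν x, (2 * π * ‖x - y‖ ^ 2)⁻¹ • (x - y)⟫ * φ y ∂σ = l * φ x) :
    ∀ x ∈ frontier Ω,
      ∫ z, ⟪νs (T x), (2 * π * ‖T x - z‖ ^ 2)⁻¹ • (T x - z)⟫ * φs z ∂σs =
        (-l) * φs (T x) := by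
  intro x hxK
  classical
  set K : Set E2 := frontier Ω with hK
  -- lower bound on the norm on K
  obtain ⟨ε, hε, hball⟩ : ∃ ε > 0, Metric.ball 0 ε ⊆ Ω := Metric.isOpen_iff.1 hopen 0 h0
  have hKa : ∀ y ∈ K, ε ≤ ‖y‖ := by
    intro y hy
    by_contra hlt
    push_neg at hlt
    have h1 : y ∈ Ω := hball (by simpa [Metric.mem_ball, dist_zero_right] using hlt)
    have h2 : y ∉ Ω := by
      have hy' : y ∈ closure Ω \ Ω := by rw [← hopen.frontier_eq]; exact hy
      exact hy'.2
    exact h2 h1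
  obtain ⟨b0, hb0⟩ := isBounded_iff_forall_norm_le.1 hbd.closure
  set b : ℝ := max b0 ε with hb
  have hab : ε ≤ b := le_max_right _ _
  have hKb : ∀ y ∈ K, ‖y‖ ≤ b := fun y hy =>
    le_trans (hb0 y (frontier_subset_closure hy)) (le_max_left _ _)
  have hKne0 : ∀ y ∈ K, y ≠ 0 := by
    intro y hy h
    have := hKa y hy
    rw [h, norm_zero] at this
    linarith
  have hx0 : x ≠ 0 := hKne0 x hxK
  have hTg : ∀ y ∈ K, T y = npInv r y := fun y hy => hT y (hKne0 y hy)
  have hTK : T '' K = npInv r '' K := Set.image_congr hTg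
  have hKmeas : MeasurableSet K := isClosed_frontier.measurableSet
  have hKfin : μH[1] K < ⊤ := by
    rw [hσ, Measure.restrict_apply hKmeas, Set.inter_self] at hfin
    exact hfin
  -- density
  set wnn : E2 → NNReal := fun y => (r ^ 2 / ‖y‖ ^ 2).toNNReal with hwnn
  have hwnnmeas : Measurable wnn :=
    (measurable_const.div ((measurable_norm).pow_const 2)).real_toNNReal
  set w : E2 → ℝ≥0∞ := fun y => (wnn y : ℝ≥0∞) with hwdef
  have hwmeas : Measurable w := hwnnmeas.coe_nnreal_ennreal
  have hwofReal : ∀ y, w y = ENNReal.ofReal (r ^ 2 / ‖y‖ ^ 2) := fun y => rfl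
  -- key measure identity
  have hMeq : σs = Measure.map (npInv r) (σ.withDensity w) := by
    rw [hσs, hTK, hσ]
    apply Measure.ext
    intro A hA
    rw [Measure.map_apply (npInv_measurable r) hA,
      withDensity_apply _ ((npInv_measurable r) hA),
      Measure.restrict_restrict ((npInv_measurable r) hA)]
    set B : Set E2 := npInv r ⁻¹' A ∩ K with hBdef
    have hBm : MeasurableSet B := ((npInv_measurable r) hA).inter hKmeas
    have hBsub : ∀ y ∈ B, ε ≤ ‖y‖ ∧ ‖y‖ ≤ b := fun y hy =>
      ⟨hKa y hy.2, hKb y hy.2⟩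
    have hBfin : μH[1] B < ⊤ :=
      lt_of_le_of_lt (measure_mono Set.inter_subset_right) hKfin
    have him : A ∩ npInv r '' K = npInv r '' B := by
      rw [npInv_image_eq_preimage r hr K, npInv_image_eq_preimage r hr B]
      ext z
      simp only [hBdef, Set.mem_inter_iff, Set.mem_preimage, npInv_npInv r hr]
    rw [Measure.restrict_apply hA, him,
      npInv_measure_image r ε b hr hε hab B hBm hBsub hBfin]
    apply lintegral_congr
    intro y
    exact (hwofReal y).symm
  -- the integrand
  set F : E2 → ℝ :=
    fun z => ⟪νs (T x), (2 * π * ‖T x - z‖ ^ 2)⁻¹ • (T x - z)⟫ * φs z with hF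
  -- measurability of the integrand w.r.t. σs
  have hTKmeas : MeasurableSet (T '' K) := by
    rw [hTK, npInv_image_eq_preimage r hr]
    exact (npInv_measurable r) hKmeas
  have hF0meas : Measurable (fun z : E2 =>
      ⟪νs (T x), (2 * π * ‖T x - z‖ ^ 2)⁻¹ • (T x - z)⟫ *
        (φ (npInv r z) * ‖npInv r z‖ ^ 2 / r ^ 2)) := by
    have h1 : Measurable fun z : E2 => T x - z := measurable_const.sub measurable_id
    have h2 : Measurable fun z : E2 =>
        (2 * π * ‖T x - z‖ ^ 2)⁻¹ • (T x - z) :=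
      ((measurable_const.mul ((h1.norm).pow_const 2)).inv).smul h1
    have h3 : Measurable fun z : E2 =>
        ⟪νs (T x), (2 * π * ‖T x - z‖ ^ 2)⁻¹ • (T x - z)⟫ :=
      measurable_const.inner h2
    exact h3.mul (((hφmeas.comp (npInv_measurable r)).mul
      (((npInv_measurable r).norm).pow_const 2)).div_const _)
  have hFae : F =ᵐ[σs] (fun z : E2 =>
      ⟪νs (T x), (2 * π * ‖T x - z‖ ^ 2)⁻¹ • (T x - z)⟫ *
        (φ (npInv r z) * ‖npInv r z‖ ^ 2 / r ^ 2)) := by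
    rw [hσs]
    filter_upwards [ae_restrict_mem hTKmeas] with z hz
    obtain ⟨y, hyK, rfl⟩ := hz
    have hy0 := hKne0 y hyK
    have e1 : T y = npInv r y := hTg y hyK
    have e2 : φs (T y) = φ y * ‖y‖ ^ 2 / r ^ 2 := hφs y hyK
    simp only [hF, e1, npInv_npInv r hr]
    rw [← e1, e2]
  have hFmeasσs : AEStronglyMeasurable F σs :=
    (hF0meas.aestronglyMeasurable).congr hFae.symm
  -- pass the integral through the map and the density
  have step1 : ∫ z, F z ∂σs = ∫ y, F (npInv r y) ∂(σ.withDensity w) := by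
    rw [hMeq]
    exact integral_map (npInv_measurable r).aemeasurable (hMeq ▸ hFmeasσs)
  have step2 : ∫ y, F (npInv r y) ∂(σ.withDensity w)
      = ∫ y, (wnn y : ℝ) • F (npInv r y) ∂σ :=
    integral_withDensity_eq_integral_smul hwnnmeas _
  -- a.e. identification with the flat-side integrand
  haveI : NoAtoms (μH[1] : Measure E2) := MeasureTheory.Measure.noAtoms_hausdorff E2 one_pos
  have hsx : σ {x} = 0 := by
    rw [hσ, Measure.restrict_apply (measurableSet_singleton x)]
    exact le_antisymm
      (le_trans (measure_mono Set.inter_subset_left) (le_of_eq (NullSingletonClass.measure_singleton (self := this) x)))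
      zero_le
  have haeK : ∀ᵐ y ∂σ, y ∈ K := by
    rw [hσ]; exact ae_restrict_mem hKmeas
  have haene : ∀ᵐ y ∂σ, y ≠ x := by
    rw [ae_iff]
    have : {y : E2 | ¬y ≠ x} = {x} := by ext y; simp
    rw [this]
    exact hsx
  set v : E2 := ν x with hv
  set G : E2 → ℝ := fun y =>
    ⟪v, x⟫ / (2 * π * r ^ 2) * φ y -
      ‖x‖ ^ 2 / r ^ 2 * (⟪v, (2 * π * ‖x - y‖ ^ 2)⁻¹ • (x - y)⟫ * φ y) with hG
  have step3 : ∫ y, (wnn y : ℝ) • F (npInv r y) ∂σ = ∫ y, G y ∂σ := by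
    apply integral_congr_ae
    filter_upwards [haeK, haene] with y hyK hyne
    have hy0 := hKne0 y hyK
    have hny : (0:ℝ) < ‖y‖ := norm_pos_iff.2 hy0
    have hcoe : (wnn y : ℝ) = r ^ 2 / ‖y‖ ^ 2 := by
      rw [hwnn]; exact Real.coe_toNNReal _ (by positivity)
    have e1 : T x = npInv r x := hTg x hxK
    have e2 : T y = npInv r y := hTg y hyK
    have e3 : φs (npInv r y) = φ y * ‖y‖ ^ 2 / r ^ 2 := by
      rw [← e2]; exact hφs y hyK
    have e4 : νs (T x) = -(v - (2 * ⟪x, v⟫ / ‖x‖ ^ 2) • x) := by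
      rw [hνs x hxK, hR x v hx0]
    rw [smul_eq_mul]
    simp only [hF, hG]
    rw [e4, e3, e1, hcoe]
    exact np_kernel_identity r hr x y v hx0 hy0 (fun h => hyne (h ▸ rfl)) (φ y)
  -- integrate
  haveI : IsFiniteMeasure σ := by
    constructor
    rw [hσ, Measure.restrict_apply_univ]
    exact hKfin
  obtain ⟨C, hC⟩ := hφbdd
  have hφint : Integrable φ σ := by
    apply Integrable.mono' (integrable_const C) hφmeas.aestronglyMeasurable
    exact ae_of_all _ fun y => by simpa [Real.norm_eq_abs] using hC y
  have i1 : Integrable (fun y => ⟪v, x⟫ / (2 * π * r ^ 2) * φ y) σ :=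
    hφint.const_mul _
  have i2 : Integrable
      (fun y => ‖x‖ ^ 2 / r ^ 2 * (⟪v, (2 * π * ‖x - y‖ ^ 2)⁻¹ • (x - y)⟫ * φ y)) σ :=
    (hint x hxK).const_mul _
  have step4 : ∫ y, G y ∂σ = -l * φs (T x) := by
    rw [hG]
    rw [integral_sub i1 i2, integral_const_mul, integral_const_mul, hmean, heig x hxK]
    rw [hφs x hxK]
    ring
  rw [← hF] at *
  rw [step1, step2, step3, step4]
end

section
/- (Eigenvalue transfer under inversion, 2D exterior case.) Let Ω ⊆ ℝ² be a bounded open set with 0 ∉ closure(Ω), r > 0, T the inversion in the sphere of radius r centered at the origin, σ the 1-dimensional Hausdorff measure restricted to ∂Ω, σ* the 1-dimensional Hausdorff measure restricted to ∂Ω* := T(∂Ω), ν : ℝ² → ℝ² any map with ν*(T x) := R_x ν(x), and φ : ℝ² → ℝ bounded Borel measurable with σ(∂Ω) < ∞ and φ*(T y) := φ(y)|y|²/r². Suppose ∫_{∂Ω} φ dσ = 0 and there is λ ∈ ℝ such that for every x ∈ ∂Ω the function y ↦ ⟨ν(x), ∇Γ(x−y)⟩φ(y) is σ-integrable and ∫_{∂Ω}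 ⟨ν(x), ∇Γ(x−y)⟩ φ(y) dσ(y) = λ φ(x). Then for every x ∈ ∂Ω, ∫_{∂Ω*} ⟨ν*(Tx), ∇Γ(Tx − z)⟩ φ*(z) dσ*(z) = λ φ*(Tx); that is, φ* is an eigenfunction of the Neumann–Poincaré-type operator on ∂Ω* with the same eigenvalue λ. Here ∇Γ(z) = z/(2π|z|²). -/
open MeasureTheory
open scoped Real RealInnerProductSpace ENNReal


noncomputable section NPAux

local notation "E" => EuclideanSpace ℝ (Fin 2)

/-- The inversion map, defined globally (value at `0` is `0`). -/
def Tm (r : ℝ) (z : E) : E := (r ^ 2 / ‖z‖ ^ 2) • z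

lemma Tm_meas (r : ℝ) : Measurable (Tm r) := by
  apply Measurable.fun_smul _ measurable_id
  exact (measurable_const.div ((measurable_norm).pow measurable_const))

lemma norm_Tm {r : ℝ} (hr : 0 < r) (z : E) : ‖Tm r z‖ = r ^ 2 / ‖z‖ := by
  rcases eq_or_ne z 0 with rfl | hz
  · simp [Tm]
  · rw [Tm, norm_smul, Real.norm_eq_abs, abs_of_nonneg (by positivity)]
    have h : ‖z‖ ≠ 0 := norm_ne_zero_iff.2 hz
    field_simp

lemma Tm_invol {r : ℝ} (hr : 0 < r) {z : E} (hz : z ≠ 0) : Tm r (Tm r z) = z := by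
  have h : ‖z‖ ≠ 0 := norm_ne_zero_iff.2 hz
  rw [Tm, norm_Tm hr, Tm, smul_smul]
  have h2 : r ^ 2 / (r ^ 2 / ‖z‖) ^ 2 * (r ^ 2 / ‖z‖ ^ 2) = 1 := by
    field_simp
  rw [h2, one_smul]

lemma dist_Tm {r : ℝ} (hr : 0 < r) {x y : E} (hx : x ≠ 0) (hy : y ≠ 0) :
    ‖Tm r x - Tm r y‖ = r ^ 2 * ‖x - y‖ / (‖x‖ * ‖y‖) := by
  have hxn : ‖x‖ ≠ 0 := norm_ne_zero_iff.2 hx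
  have hyn : ‖y‖ ≠ 0 := norm_ne_zero_iff.2 hy
  have hsub := norm_sub_sq_real x y
  have hsq : ‖Tm r x - Tm r y‖ ^ 2 = (r ^ 2 * ‖x - y‖ / (‖x‖ * ‖y‖)) ^ 2 := by
    rw [norm_sub_sq_real, div_pow, mul_pow, hsub]
    simp only [Tm, norm_smul, real_inner_smul_left, real_inner_smul_right,
      Real.norm_eq_abs, abs_of_nonneg (show (0:ℝ) ≤ r ^ 2 / ‖x‖ ^ 2 by positivity),
      abs_of_nonneg (show (0:ℝ) ≤ r ^ 2 / ‖y‖ ^ 2 by positivity)]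
    field_simp
    ring
  have h1 : (0:ℝ) ≤ ‖Tm r x - Tm r y‖ := norm_nonneg _
  have h2 : (0:ℝ) ≤ r ^ 2 * ‖x - y‖ / (‖x‖ * ‖y‖) := by positivity
  nlinarith [sq_nonneg (‖Tm r x - Tm r y‖ - r ^ 2 * ‖x - y‖ / (‖x‖ * ‖y‖)),
    sq_nonneg (‖Tm r x - Tm r y‖ + r ^ 2 * ‖x - y‖ / (‖x‖ * ‖y‖))]

lemma lip_Tm {r : ℝ} (hr : 0 < r) {m : ℝ} (hm : 0 < m) :
    LipschitzOnWith (Real.toNNReal (r ^ 2 / m ^ 2)) (Tm r) {z : E | m ≤ ‖z‖} := by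
  apply LipschitzOnWith.of_dist_le_mul
  intro x hx y hy
  simp only [Set.mem_setOf_eq] at hx hy
  have hx0 : x ≠ 0 := by intro h; rw [h, norm_zero] at hx; linarith
  have hy0 : y ≠ 0 := by intro h; rw [h, norm_zero] at hy; linarith
  have hxy : (0:ℝ) < ‖x‖ * ‖y‖ := by
    have := mul_le_mul hx hy (le_of_lt hm) (norm_nonneg x)
    nlinarith
  rw [dist_eq_norm, dist_eq_norm, dist_Tm hr hx0 hy0,
      Real.coe_toNNReal _ (by positivity), div_le_iff₀ hxy]
  have h1 : m * m ≤ ‖x‖ * ‖y‖ := mul_le_mul hx hy (le_of_lt hm) (norm_nonneg x)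
  have h2 : r ^ 2 / m ^ 2 * m ^ 2 = r ^ 2 := by field_simp
  have h3 := mul_le_mul_of_nonneg_left h1 (show (0:ℝ) ≤ r ^ 2 / m ^ 2 * ‖x - y‖ by positivity)
  nlinarith [norm_nonneg (x - y)]

lemma contOn_Tm {r : ℝ} {s : Set E} (hs : ∀ z ∈ s, z ≠ 0) : ContinuousOn (Tm r) s := by
  apply ContinuousOn.fun_smul _ continuousOn_id
  exact ContinuousOn.div continuousOn_const
    (continuous_norm.continuousOn.pow 2)
    (fun z hz => pow_ne_zero 2 (norm_ne_zero_iff.2 (hs z hz)))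

lemma injOn_Tm {r : ℝ} (hr : 0 < r) {s : Set E} (hs : ∀ z ∈ s, z ≠ 0) :
    Set.InjOn (Tm r) s := by
  intro a ha b hb hab
  have := congrArg (Tm r) hab
  rwa [Tm_invol hr (hs a ha), Tm_invol hr (hs b hb)] at this

lemma ennreal_le_aux {a b : ℝ≥0∞}
    (h : ∀ ε : ℝ, 0 < ε → a ≤ ENNReal.ofReal ((1 + ε) ^ 2) * b) : a ≤ b := by
  have htend : Filter.Tendsto (fun ε : ℝ => ENNReal.ofReal ((1 + ε) ^ 2) * b)
      (nhdsWithin 0 (Set.Ioi 0)) (nhds b) := by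
    have h1 : Filter.Tendsto (fun ε : ℝ => ENNReal.ofReal ((1 + ε) ^ 2))
        (nhdsWithin 0 (Set.Ioi 0)) (nhds 1) := by
      have h2 : Filter.Tendsto (fun ε : ℝ => (1 + ε) ^ 2) (nhdsWithin 0 (Set.Ioi 0)) (nhds 1) := by
        have hcont : Continuous (fun ε : ℝ => (1 + ε) ^ 2) := by continuity
        have h3 := hcont.tendsto (0:ℝ)
        simp only [add_zero, one_pow] at h3
        exact h3.mono_left nhdsWithin_le_nhds
      simpa [Function.comp_def] using (ENNReal.continuous_ofReal.tendsto 1).comp h2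
    simpa using ENNReal.Tendsto.mul_const h1 (Or.inl one_ne_zero)
  refine ge_of_tendsto htend ?_
  filter_upwards [self_mem_nhdsWithin] with ε (hε : ε ∈ Set.Ioi 0)
  exact h ε hε

lemma image_meas {r : ℝ} (hr : 0 < r) {m : ℝ} (hm : 0 < m) {A : Set E}
    (hA : MeasurableSet A) (hAm : ∀ z ∈ A, m ≤ ‖z‖) :
    μH[1] (Tm r '' A) = ∫⁻ z in A, ENNReal.ofReal (r ^ 2 / ‖z‖ ^ 2) ∂μH[1] := by
  have hA0 : ∀ z ∈ A, z ≠ 0 := fun z hz h0 => by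
    have := hAm z hz; rw [h0, norm_zero] at this; linarith
  have hJmeas : Measurable (fun z : E => ENNReal.ofReal (r ^ 2 / ‖z‖ ^ 2)) :=
    ENNReal.measurable_ofReal.comp (measurable_const.div (measurable_norm.pow_const 2))
  have main : ∀ ε : ℝ, 0 < ε →
      μH[1] (Tm r '' A) ≤ ENNReal.ofReal ((1 + ε) ^ 2) *
        (∫⁻ z in A, ENNReal.ofReal (r ^ 2 / ‖z‖ ^ 2) ∂μH[1]) ∧
      (∫⁻ z in A, ENNReal.ofReal (r ^ 2 / ‖z‖ ^ 2) ∂μH[1]) ≤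
        ENNReal.ofReal ((1 + ε) ^ 2) * μH[1] (Tm r '' A) := by
    intro ε hε
    set c : ℝ := 1 + ε with hcdef
    have hc1 : 1 < c := by simp only [hcdef, lt_add_iff_pos_right]; exact hε
    have hc0 : 0 < c := by linarith
    set Ai : ℕ → Set E := fun i => A ∩ {z : E | m * c ^ i ≤ ‖z‖ ∧ ‖z‖ < m * c ^ (i + 1)}
      with hAidef
    have hmc : ∀ i : ℕ, 0 < m * c ^ i := fun i => by positivity
    have hAimeas : ∀ i, MeasurableSet (Ai i) := fun i =>
      hA.inter ((measurable_norm (measurableSet_Ici (a := m * c ^ i))).inter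
        (measurable_norm (measurableSet_Iio (a := m * c ^ (i + 1)))))
    have hAisub : ∀ i, Ai i ⊆ A := fun i => Set.inter_subset_left
    have hAi0 : ∀ i, ∀ z ∈ Ai i, z ≠ 0 := fun i z hz => hA0 z (hAisub i hz)
    have hcover : A = ⋃ i, Ai i := by
      apply Set.Subset.antisymm
      · intro z hz
        have hzm := hAm z hz
        have hex : ∃ n : ℕ, ‖z‖ < m * c ^ n := by
          obtain ⟨n, hn⟩ := pow_unbounded_of_one_lt (‖z‖ / m) hc1
          rw [div_lt_iff₀ hm] at hn
          exact ⟨n, by rw [mul_comm]; exact hn⟩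
        set N := Nat.find hex with hNdef
        have hN : ‖z‖ < m * c ^ N := Nat.find_spec hex
        have hN0 : N ≠ 0 := by
          intro h
          rw [h, pow_zero, mul_one] at hN
          linarith
        have hlow : ¬ ‖z‖ < m * c ^ (N - 1) := Nat.find_min hex (by omega)
        refine Set.mem_iUnion.2 ⟨N - 1, hz, not_lt.1 hlow, ?_⟩
        have h11 : N - 1 + 1 = N := by omega
        rw [h11]
        exact hN
      · exact Set.iUnion_subset hAisub
    have hshell : ∀ i j : ℕ, i < j → ∀ z, z ∈ Ai i → z ∈ Ai j → False := by
      intro i j hij z hzi hzj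
      have h1 : m * c ^ (i + 1) ≤ m * c ^ j :=
        mul_le_mul_of_nonneg_left (pow_le_pow_right₀ hc1.le hij) hm.le
      have := hzi.2.2
      have := hzj.2.1
      linarith
    have hdisj : Pairwise (Function.onFun Disjoint Ai) := by
      intro i j hij
      rw [Function.onFun, Set.disjoint_left]
      intro z hzi hzj
      rcases lt_or_gt_of_ne hij with h | h
      · exact hshell i j h z hzi hzj
      · exact hshell j i h z hzj hzi
    have hupper : ∀ i, μH[1] (Tm r '' Ai i) ≤
        ENNReal.ofReal (c ^ 2) * ∫⁻ z in Ai i, ENNReal.ofReal (r ^ 2 / ‖z‖ ^ 2) ∂μH[1] := by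
      intro i
      have hlipi : LipschitzOnWith (Real.toNNReal (r ^ 2 / (m * c ^ i) ^ 2)) (Tm r) (Ai i) :=
        (lip_Tm hr (hmc i)).mono (fun z hz => hz.2.1)
      have h1 : μH[1] (Tm r '' Ai i) ≤
          ENNReal.ofReal (r ^ 2 / (m * c ^ i) ^ 2) * μH[1] (Ai i) := by
        have := hlipi.hausdorffMeasure_image_le (zero_le_one)
        simpa [ENNReal.rpow_one, ENNReal.ofReal] using this
      refine h1.trans ?_
      rw [← lintegral_const_mul _ hJmeas, ← setLIntegral_const]
      apply setLIntegral_mono (measurable_const.mul hJmeas)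
      intro z hz
      rw [Pi.mul_apply, ← ENNReal.ofReal_mul (by positivity)]
      apply ENNReal.ofReal_le_ofReal
      have hzlt : ‖z‖ < m * c ^ (i + 1) := hz.2.2
      have hzge : m * c ^ i ≤ ‖z‖ := hz.2.1
      have hz0 : 0 < ‖z‖ := lt_of_lt_of_le (hmc i) hzge
      rw [div_le_iff₀ (by positivity), mul_comm (c ^ 2), mul_assoc, div_mul_eq_mul_div,
        le_div_iff₀ (by positivity)]
      have h5 : ‖z‖ ^ 2 ≤ (m * c ^ i) ^ 2 * c ^ 2 := by
        have h2 : ‖z‖ ≤ m * c ^ i * c := by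
          rw [mul_assoc, ← pow_succ]
          exact hzlt.le
        nlinarith
      nlinarith [sq_nonneg r]
    have hlower : ∀ i, (∫⁻ z in Ai i, ENNReal.ofReal (r ^ 2 / ‖z‖ ^ 2) ∂μH[1]) ≤
        ENNReal.ofReal (c ^ 2) * μH[1] (Tm r '' Ai i) := by
      intro i
      have hmc1 : 0 < r ^ 2 / (m * c ^ (i + 1)) := by positivity
      have hTAi_sub : Tm r '' Ai i ⊆ {w : E | r ^ 2 / (m * c ^ (i + 1)) ≤ ‖w‖} := by
        rintro w ⟨z, hz, rfl⟩
        rw [Set.mem_setOf_eq, norm_Tm hr]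
        have hz0 : 0 < ‖z‖ := norm_pos_iff.2 (hAi0 i z hz)
        exact div_le_div_of_nonneg_left (sq_nonneg r) hz0 hz.2.2.le |>.trans_eq rfl
      have hlipTi : LipschitzOnWith
          (Real.toNNReal (r ^ 2 / (r ^ 2 / (m * c ^ (i + 1))) ^ 2)) (Tm r) (Tm r '' Ai i) :=
        (lip_Tm hr hmc1).mono hTAi_sub
      have hTmTm : Tm r '' (Tm r '' Ai i) = Ai i := by
        rw [← Set.image_comp]
        rw [show (Tm r ∘ Tm r) '' Ai i = id '' Ai i from
          Set.image_congr (fun z hz => Tm_invol hr (hAi0 i z hz))]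
        exact Set.image_id _
      have hback : μH[1] (Ai i) ≤
          ENNReal.ofReal ((m * c ^ (i + 1)) ^ 2 / r ^ 2) * μH[1] (Tm r '' Ai i) := by
        have h2 := hlipTi.hausdorffMeasure_image_le (zero_le_one)
        rw [hTmTm] at h2
        have heq : r ^ 2 / (r ^ 2 / (m * c ^ (i + 1))) ^ 2 = (m * c ^ (i + 1)) ^ 2 / r ^ 2 := by
          field_simp
        rw [heq] at h2
        simpa [ENNReal.rpow_one, ENNReal.ofReal] using h2
      have hJup : (∫⁻ z in Ai i, ENNReal.ofReal (r ^ 2 / ‖z‖ ^ 2) ∂μH[1]) ≤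
          ENNReal.ofReal (r ^ 2 / (m * c ^ i) ^ 2) * μH[1] (Ai i) := by
        rw [← setLIntegral_const]
        apply setLIntegral_mono' (hAimeas i)
        intro z hz
        apply ENNReal.ofReal_le_ofReal
        have hzge : m * c ^ i ≤ ‖z‖ := hz.2.1
        have hz0 : 0 < ‖z‖ := lt_of_lt_of_le (hmc i) hzge
        apply div_le_div_of_nonneg_left (sq_nonneg r) (by positivity)
        exact pow_le_pow_left₀ (hmc i).le hzge 2
      refine hJup.trans ?_
      refine (mul_le_mul_right hback _).trans ?_
      rw [← mul_assoc, ← ENNReal.ofReal_mul (by positivity)]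
      apply mul_le_mul_left
      apply ENNReal.ofReal_le_ofReal
      have h3 : r ^ 2 / (m * c ^ i) ^ 2 * ((m * c ^ (i + 1)) ^ 2 / r ^ 2) = c ^ 2 := by
        field_simp
        ring
      rw [h3]
    have hTAimeas : ∀ i, MeasurableSet (Tm r '' Ai i) := fun i =>
      (hAimeas i).image_of_continuousOn_injOn (contOn_Tm (hAi0 i)) (injOn_Tm hr (hAi0 i))
    have hTdisj : Pairwise (Function.onFun Disjoint (fun i => Tm r '' Ai i)) := by
      intro i j hij
      rw [Function.onFun, Set.disjoint_left]
      rintro w ⟨z1, hz1, rfl⟩ ⟨z2, hz2, heq⟩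
      have hz12 : z2 = z1 := by
        have := congrArg (Tm r) heq
        rwa [Tm_invol hr (hAi0 j z2 hz2), Tm_invol hr (hAi0 i z1 hz1)] at this
      rw [hz12] at hz2
      exact Set.disjoint_left.1 (hdisj hij) hz1 hz2
    have himgU : Tm r '' A = ⋃ i, Tm r '' Ai i := by
      rw [hcover, Set.image_iUnion]
    have hintsum : (∫⁻ z in A, ENNReal.ofReal (r ^ 2 / ‖z‖ ^ 2) ∂μH[1]) =
        ∑' i, ∫⁻ z in Ai i, ENNReal.ofReal (r ^ 2 / ‖z‖ ^ 2) ∂μH[1] := by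
      conv_lhs => rw [hcover]
      exact lintegral_iUnion hAimeas hdisj _
    constructor
    · calc μH[1] (Tm r '' A) = μH[1] (⋃ i, Tm r '' Ai i) := by rw [himgU]
        _ ≤ ∑' i, μH[1] (Tm r '' Ai i) := measure_iUnion_le _
        _ ≤ ∑' i, ENNReal.ofReal (c ^ 2) *
            ∫⁻ z in Ai i, ENNReal.ofReal (r ^ 2 / ‖z‖ ^ 2) ∂μH[1] :=
          ENNReal.tsum_le_tsum hupper
        _ = ENNReal.ofReal (c ^ 2) *
            ∑' i, ∫⁻ z in Ai i, ENNReal.ofReal (r ^ 2 / ‖z‖ ^ 2) ∂μH[1] :=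
          ENNReal.tsum_mul_left
        _ = ENNReal.ofReal (c ^ 2) * ∫⁻ z in A, ENNReal.ofReal (r ^ 2 / ‖z‖ ^ 2) ∂μH[1] := by
          rw [hintsum]
    · calc (∫⁻ z in A, ENNReal.ofReal (r ^ 2 / ‖z‖ ^ 2) ∂μH[1]) =
          ∑' i, ∫⁻ z in Ai i, ENNReal.ofReal (r ^ 2 / ‖z‖ ^ 2) ∂μH[1] := hintsum
        _ ≤ ∑' i, ENNReal.ofReal (c ^ 2) * μH[1] (Tm r '' Ai i) :=
          ENNReal.tsum_le_tsum hlower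
        _ = ENNReal.ofReal (c ^ 2) * ∑' i, μH[1] (Tm r '' Ai i) := ENNReal.tsum_mul_left
        _ = ENNReal.ofReal (c ^ 2) * μH[1] (Tm r '' A) := by
          rw [himgU, measure_iUnion hTdisj hTAimeas]
  exact le_antisymm (ennreal_le_aux fun ε hε => (main ε hε).1)
    (ennreal_le_aux fun ε hε => (main ε hε).2)

lemma sigma_map {r : ℝ} (hr : 0 < r) {m : ℝ} (hm : 0 < m) {S : Set E}
    (hS : MeasurableSet S) (hSm : ∀ z ∈ S, m ≤ ‖z‖) :
    μH[1].restrict (Tm r '' S) = Measure.map (Tm r)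
      ((μH[1].restrict S).withDensity (fun z => ENNReal.ofReal (r ^ 2 / ‖z‖ ^ 2))) := by
  ext B hB
  rw [Measure.map_apply (Tm_meas r) hB, withDensity_apply _ ((Tm_meas r) hB),
    Measure.restrict_restrict ((Tm_meas r) hB), Measure.restrict_apply hB]
  have hset : B ∩ Tm r '' S = Tm r '' (Tm r ⁻¹' B ∩ S) := by
    apply Set.Subset.antisymm
    · rintro w ⟨hwB, z, hz, rfl⟩
      exact ⟨z, ⟨hwB, hz⟩, rfl⟩
    · rintro w ⟨z, ⟨hzB, hz⟩, rfl⟩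
      exact ⟨hzB, z, hz, rfl⟩
  rw [hset, image_meas hr hm (((Tm_meas r) hB).inter hS) (fun z hz => hSm z hz.2)]

set_option maxHeartbeats 1000000 in
lemma kernel_identity {r : ℝ} (hr : 0 < r) {x y : E} (hx : x ≠ 0) (hy : y ≠ 0)
    (hxy : x ≠ y) (v : E) :
    ⟪v - (2 * ⟪x, v⟫ / ‖x‖ ^ 2) • x, (2 * π * ‖Tm r x - Tm r y‖ ^ 2)⁻¹ • (Tm r x - Tm r y)⟫
      = ‖x‖ ^ 2 / r ^ 2 * ⟪v, (2 * π * ‖x - y‖ ^ 2)⁻¹ • (x - y)⟫ - ⟪v, x⟫ / (2 * π * r ^ 2) := by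
  have hxn : ‖x‖ ≠ 0 := norm_ne_zero_iff.2 hx
  have hyn : ‖y‖ ≠ 0 := norm_ne_zero_iff.2 hy
  have hxyn : ‖x - y‖ ≠ 0 := norm_ne_zero_iff.2 (sub_ne_zero.2 hxy)
  have hpi : (π : ℝ) ≠ 0 := Real.pi_ne_zero
  have hrn : r ≠ 0 := ne_of_gt hr
  have hnum : ‖Tm r x - Tm r y‖ ^ 2 = (r ^ 2) ^ 2 * ‖x - y‖ ^ 2 / (‖x‖ ^ 2 * ‖y‖ ^ 2) := by
    rw [dist_Tm hr hx hy]
    field_simp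
  have hTsub : Tm r x - Tm r y = (r ^ 2 / ‖x‖ ^ 2) • x - (r ^ 2 / ‖y‖ ^ 2) • y := rfl
  have hw : ‖x - y‖ ^ 2 = ‖x‖ ^ 2 - 2 * ⟪x, y⟫ + ‖y‖ ^ 2 := norm_sub_sq_real x y
  rw [hnum, hTsub]
  simp only [inner_sub_left, inner_sub_right, real_inner_smul_left, real_inner_smul_right,
    real_inner_self_eq_norm_sq, real_inner_comm y x, real_inner_comm x v]
  rw [hw]
  have hwn : ‖x‖ ^ 2 - 2 * ⟪x, y⟫ + ‖y‖ ^ 2 ≠ 0 := by rw [← hw]; positivity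
  set p := ⟪v, x⟫ with hp
  set q := ⟪v, y⟫ with hq
  set s := ⟪x, y⟫ with hs
  set a := ‖x‖ with ha
  set b := ‖y‖ with hb
  have h1 : ⟪x, v⟫ = p := by rw [real_inner_comm]
  have h2 : ⟪y, x⟫ = s := by rw [real_inner_comm]
  rw [h1, h2]
  field_simp
  ring

end NPAux

/-- Eigenvalue transfer under inversion, 2D exterior case: if `0 ∉ closure Ω`, `φ` has mean
zero on `∂Ω` and is an eigenfunction of the Neumann–Poincaré-type operator with eigenvalue
`λ`, then `φ*` is an eigenfunction of the Neumann–Poincaré-type operator on `∂Ω*` with the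
same eigenvalue `λ`. Here `∇Γ(z) = z/(2π|z|²)`, `φ*(Ty) = φ(y)|y|²/r²`,
and `ν*(Tx) = R_x ν(x)`. -/
theorem np_eigenvalue_inversion_exterior_dim2
    (r : ℝ) (hr : 0 < r) (Ω : Set (EuclideanSpace ℝ (Fin 2)))
    (hopen : IsOpen Ω) (hbd : Bornology.IsBounded Ω) (h0 : (0 : EuclideanSpace ℝ (Fin 2)) ∉ closure Ω)
    (T : EuclideanSpace ℝ (Fin 2) → EuclideanSpace ℝ (Fin 2))
    (hT : ∀ x : EuclideanSpace ℝ (Fin 2), x ≠ 0 → T x = (r ^ 2 / ‖x‖ ^ 2) • x)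
    (σ σs : Measure (EuclideanSpace ℝ (Fin 2)))
    (hσ : σ = μH[1].restrict (frontier Ω))
    (hσs : σs = μH[1].restrict (T '' frontier Ω))
    (hfin : σ (frontier Ω) < ⊤)
    (R : EuclideanSpace ℝ (Fin 2) → EuclideanSpace ℝ (Fin 2) → EuclideanSpace ℝ (Fin 2))
    (hR : ∀ x v : EuclideanSpace ℝ (Fin 2), x ≠ 0 →
      R x v = v - (2 * ⟪x, v⟫ / ‖x‖ ^ 2) • x)
    (ν νs : EuclideanSpace ℝ (Fin 2) → EuclideanSpace ℝ (Fin 2))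
    (hνs : ∀ x ∈ frontier Ω, νs (T x) = R x (ν x))
    (φ : EuclideanSpace ℝ (Fin 2) → ℝ) (hφmeas : Measurable φ)
    (hφbdd : ∃ C, ∀ y, |φ y| ≤ C)
    (φs : EuclideanSpace ℝ (Fin 2) → ℝ)
    (hφs : ∀ y ∈ frontier Ω, φs (T y) = φ y * ‖y‖ ^ 2 / r ^ 2)
    (hmean : ∫ y, φ y ∂σ = 0)
    (l : ℝ)
    (hint : ∀ x ∈ frontier Ω,
      Integrable (fun y => ⟪ν x, (2 * π * ‖x - y‖ ^ 2)⁻¹ • (x - y)⟫ * φ y) σ)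
    (heig : ∀ x ∈ frontier Ω,
      ∫ y, ⟪ν x, (2 * π * ‖x - y‖ ^ 2)⁻¹ • (x - y)⟫ * φ y ∂σ = l * φ x) :
    ∀ x ∈ frontier Ω,
      ∫ z, ⟪νs (T x), (2 * π * ‖T x - z‖ ^ 2)⁻¹ • (T x - z)⟫ * φs z ∂σs =
        l * φs (T x) := by
  subst hσ hσs
  intro x hx
  have hfr_meas : MeasurableSet (frontier Ω) := isClosed_frontier.measurableSet
  obtain ⟨m, hm, hmfr⟩ : ∃ m : ℝ, 0 < m ∧ ∀ z ∈ frontier Ω, m ≤ ‖z‖ := by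
    obtain ⟨m, hm, hball⟩ := Metric.isOpen_iff.1 isClosed_closure.isOpen_compl 0 h0
    refine ⟨m, hm, fun z hz => ?_⟩
    by_contra h
    push_neg at h
    exact hball (by rw [Metric.mem_ball, dist_zero_right]; exact h) (frontier_subset_closure hz)
  have hfr0 : ∀ z ∈ frontier Ω, z ≠ 0 := fun z hz h0' => by
    have := hmfr z hz; rw [h0', norm_zero] at this; linarith
  have hx0 : x ≠ 0 := hfr0 x hx
  have hTx : T x = Tm r x := hT x hx0
  have hTfr : T '' frontier Ω = Tm r '' frontier Ω :=
    Set.image_congr (fun z hz => hT z (hfr0 z hz))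
  -- finiteness of the restricted Hausdorff measure
  have hfin' : μH[1] (frontier Ω) < ⊤ := by
    rwa [Measure.restrict_apply hfr_meas, Set.inter_self] at hfin
  haveI hσfin : IsFiniteMeasure (μH[1].restrict (frontier Ω)) := by
    constructor
    rw [Measure.restrict_apply_univ]
    exact hfin'
  -- measurability facts
  have hψmeas : Measurable (fun z : EuclideanSpace ℝ (Fin 2) =>
      φ (Tm r z) * ‖Tm r z‖ ^ 2 / r ^ 2) :=
    ((hφmeas.comp (Tm_meas r)).mul (((Tm_meas r).norm).pow_const 2)).div_const _
  have hGmeas : Measurable (fun z : EuclideanSpace ℝ (Fin 2) =>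
      ⟪νs (Tm r x), (2 * π * ‖Tm r x - z‖ ^ 2)⁻¹ • (Tm r x - z)⟫ *
        (φ (Tm r z) * ‖Tm r z‖ ^ 2 / r ^ 2)) := by
    apply Measurable.mul _ hψmeas
    apply Measurable.inner measurable_const
    exact Measurable.smul
      ((((measurable_const.sub measurable_id).norm.pow_const 2).const_mul (2 * π)).inv)
      (measurable_const.sub measurable_id)
  have himg_meas : MeasurableSet (Tm r '' frontier Ω) :=
    hfr_meas.image_of_continuousOn_injOn (contOn_Tm hfr0) (injOn_Tm hr hfr0)
  -- a.e. facts for the base measure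
  have hae_ne : ∀ᵐ y ∂(μH[1].restrict (frontier Ω)), y ≠ x := by
    haveI := MeasureTheory.Measure.noAtoms_hausdorff (EuclideanSpace ℝ (Fin 2)) one_pos
    have hsing : (μH[1].restrict (frontier Ω)) {x} = 0 :=
      le_antisymm ((Measure.restrict_le_self _).trans_eq (measure_singleton x)) zero_le
    rw [ae_iff]
    convert hsing using 2
    ext y
    simp
  -- integrability
  obtain ⟨C, hC⟩ := hφbdd
  have hφint : Integrable φ (μH[1].restrict (frontier Ω)) := by
    refine Integrable.mono' (integrable_const C) hφmeas.aestronglyMeasurable ?_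
    exact Filter.Eventually.of_forall fun y => by rw [Real.norm_eq_abs]; exact hC y
  -- main computation
  have key : (∫ z, ⟪νs (Tm r x), (2 * π * ‖Tm r x - z‖ ^ 2)⁻¹ • (Tm r x - z)⟫ * φs z
      ∂(μH[1].restrict (Tm r '' frontier Ω))) = l * (φ x * ‖x‖ ^ 2 / r ^ 2) := by
    rw [show (∫ z, ⟪νs (Tm r x), (2 * π * ‖Tm r x - z‖ ^ 2)⁻¹ • (Tm r x - z)⟫ * φs z
        ∂(μH[1].restrict (Tm r '' frontier Ω))) =
        ∫ z, ⟪νs (Tm r x), (2 * π * ‖Tm r x - z‖ ^ 2)⁻¹ • (Tm r x - z)⟫ *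
          (φ (Tm r z) * ‖Tm r z‖ ^ 2 / r ^ 2) ∂(μH[1].restrict (Tm r '' frontier Ω)) from by
      apply integral_congr_ae
      filter_upwards [ae_restrict_mem himg_meas] with z hz
      obtain ⟨y, hy, rfl⟩ := hz
      have hTy : T y = Tm r y := hT y (hfr0 y hy)
      rw [Tm_invol hr (hfr0 y hy),
        show φs (Tm r y) = φ y * ‖y‖ ^ 2 / r ^ 2 from by rw [← hTy]; exact hφs y hy]]
    rw [sigma_map hr hm hfr_meas hmfr,
      integral_map (Tm_meas r).aemeasurable hGmeas.aestronglyMeasurable]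
    rw [show ((μH[1].restrict (frontier Ω)).withDensity
        (fun z => ENNReal.ofReal (r ^ 2 / ‖z‖ ^ 2))) =
        ((μH[1].restrict (frontier Ω)).withDensity
        (fun z => (Real.toNNReal (r ^ 2 / ‖z‖ ^ 2) : ℝ≥0∞))) from rfl]
    rw [integral_withDensity_eq_integral_smul (f := fun z => Real.toNNReal (r ^ 2 / ‖z‖ ^ 2))
      ((measurable_const.div (measurable_norm.pow_const 2)).real_toNNReal) _]
    rw [show (∫ y, Real.toNNReal (r ^ 2 / ‖y‖ ^ 2) •
        (⟪νs (Tm r x), (2 * π * ‖Tm r x - Tm r y‖ ^ 2)⁻¹ • (Tm r x - Tm r y)⟫ *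
          (φ (Tm r (Tm r y)) * ‖Tm r (Tm r y)‖ ^ 2 / r ^ 2))
        ∂(μH[1].restrict (frontier Ω))) =
        ∫ y, (‖x‖ ^ 2 / r ^ 2 * (⟪ν x, (2 * π * ‖x - y‖ ^ 2)⁻¹ • (x - y)⟫ * φ y) +
          (-(⟪ν x, x⟫ / (2 * π * r ^ 2))) * φ y) ∂(μH[1].restrict (frontier Ω)) from by
      apply integral_congr_ae
      filter_upwards [ae_restrict_mem hfr_meas, hae_ne] with y hy hyx
      have hy0 : y ≠ 0 := hfr0 y hy
      have hyn : ‖y‖ ≠ 0 := norm_ne_zero_iff.2 hy0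
      have hrn : r ≠ 0 := ne_of_gt hr
      have hνsx : νs (Tm r x) = ν x - (2 * ⟪x, ν x⟫ / ‖x‖ ^ 2) • x := by
        rw [← hTx, hνs x hx, hR x (ν x) hx0]
      rw [Tm_invol hr hy0, hνsx,
        kernel_identity hr hx0 hy0 (Ne.symm hyx) (ν x),
        NNReal.smul_def, Real.coe_toNNReal _ (by positivity), smul_eq_mul]
      set K := ⟪ν x, (2 * π * ‖x - y‖ ^ 2)⁻¹ • (x - y)⟫ with hK
      set P := ⟪ν x, x⟫ with hP
      field_simp
      ring]
    rw [integral_add ((hint x hx).const_mul _) (hφint.const_mul _),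
      integral_const_mul, integral_const_mul, heig x hx, hmean, mul_zero, add_zero]
    ring
  rw [hTfr, hTx, show φs (Tm r x) = φ x * ‖x‖ ^ 2 / r ^ 2 from by
    rw [← hTx]; exact hφs x hx]
  exact key
end
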